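/- arXiv:1808.05791 — 4 statements merged into one kernel-verified Lean document; each statement's English description precedes it below -/
import Mathlib

section
/- Let g = (O, W) be a game such that for every (w, v) ∈ C^* × V, if Player 2 has a winning strategy from (w, v) then Player 2 has a finite-memory winning strategy from (w, v). Let L ⊆ C^* be an arbitrary language (not necessarily regular) and let g_L = (O, W_L) where W_L = {ρ ∈ C^ω : ρ ∈ W or Pref(ρ) ∩ L = ∅}. Then for every vertex v₀: if Player 2 has a winning strategy from (ε, v₀) in g_L, then Player 2 has a finite-memory winning strategy from (ε, v₀) in g_L. -/
/-! Common framework: arenas, strategies, plays, winning, finite memory, (h)SPE. -/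

structure Arena (V C : Type) where
  V1 : Set V
  V2 : Set V
  E : Set (V × V)
  Γ : V → C

namespace Arena

variable {V C : Type}

/-- The vertex set of an arena. -/
def vertices (O : Arena V C) : Set V := O.V1 ∪ O.V2

/-- Well-formedness of an arena: the two players' vertex sets are disjoint, edges stay
within the vertex set, and every vertex has at least one outgoing edge. -/
def WF (O : Arena V C) : Prop :=
  Disjoint O.V1 O.V2 ∧ (∀ e ∈ O.E, e.1 ∈ O.vertices ∧ e.2 ∈ O.vertices) ∧
    ∀ v ∈ O.vertices, ∃ u, (v, u) ∈ O.E

/-- Restriction of an arena to a subset `S` of the vertices. -/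
def restrict (O : Arena V C) (S : Set V) : Arena V C :=
  ⟨O.V1 ∩ S, O.V2 ∩ S, O.E ∩ S ×ˢ S, O.Γ⟩

/-- Product of an arena with a DFA over the colors. -/
def prodDFA {Q : Type} (O : Arena V C) (A : DFA C Q) : Arena (V × Q) C :=
  ⟨O.V1 ×ˢ (Set.univ : Set Q), O.V2 ×ˢ (Set.univ : Set Q),
    {p : (V × Q) × V × Q | (p.1.1, p.2.1) ∈ O.E ∧ p.2.2 = A.step p.1.2 (O.Γ p.1.1)},
    fun vq => O.Γ vq.1⟩

/-- A strategy (for Player 1) is valid if it follows edges on Player 1's vertices. -/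
def Valid1 (O : Arena V C) (σ : List C → V → V) : Prop :=
  ∀ (w : List C), ∀ v ∈ O.V1, (v, σ w v) ∈ O.E

/-- A strategy (for Player 2) is valid if it follows edges on Player 2's vertices. -/
def Valid2 (O : Arena V C) (σ : List C → V → V) : Prop :=
  ∀ (w : List C), ∀ v ∈ O.V2, (v, σ w v) ∈ O.E

open Classical in
/-- The combination σ₁ ∪ σ₂ of a strategy profile into one function. -/
noncomputable def combine (O : Arena V C) (σ1 σ2 : List C → V → V) : List C → V → V :=
  fun w v => if v ∈ O.V1 then σ1 w v else σ2 w v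

/-- The sequence of (history, current vertex) pairs generated by a profile from `(w, v)`. -/
def stepSeq (O : Arena V C) (σ : List C → V → V) (w : List C) (v : V) : ℕ → List C × V
  | 0 => (w, v)
  | k + 1 =>
    let p := stepSeq O σ w v k
    (p.1 ++ [O.Γ p.2], σ p.1 p.2)

/-- The play `Σ_σ(w, v)` induced by a (combined) strategy profile `σ` from `(w, v)`:
its first `|w|` letters are `w`, then it continues with the colors of the visited vertices. -/
def play (O : Arena V C) (σ : List C → V → V) (w : List C) (v : V) : ℕ → C :=
  fun i => if h : i < w.length then w.get ⟨i, h⟩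
    else O.Γ (stepSeq O σ w v (i - w.length)).2

/-- `σ1` is a winning strategy of Player 1 from `(w, v)` for winning condition `W`. -/
def Winning1 (O : Arena V C) (W : Set (ℕ → C)) (σ1 : List C → V → V)
    (w : List C) (v : V) : Prop :=
  ∀ σ2, O.Valid2 σ2 → O.play (O.combine σ1 σ2) w v ∈ W

/-- `σ2` is a winning strategy of Player 2 from `(w, v)` for winning condition `W`. -/
def Winning2 (O : Arena V C) (W : Set (ℕ → C)) (σ2 : List C → V → V)
    (w : List C) (v : V) : Prop :=
  ∀ σ1, O.Valid1 σ1 → O.play (O.combine σ1 σ2) w v ∉ W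

/-- Player 1 has a winning strategy from `(w, v)`. -/
def Wins1From (O : Arena V C) (W : Set (ℕ → C)) (w : List C) (v : V) : Prop :=
  ∃ σ1, O.Valid1 σ1 ∧ O.Winning1 W σ1 w v

/-- Player 2 has a winning strategy from `(w, v)`. -/
def Wins2From (O : Arena V C) (W : Set (ℕ → C)) (w : List C) (v : V) : Prop :=
  ∃ σ2, O.Valid2 σ2 ∧ O.Winning2 W σ2 w v

/-- A strategy (of the player owning the vertices `Vi`) is finite-memory:
it is computed by a Moore machine with finitely many states. -/
def IsFM (Vi : Set V) (σ : List C → V → V) : Prop :=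
  ∃ (M : Type) (_ : Fintype M) (m0 : M) (αu : M → C → M) (αn : M → V → V),
    ∀ (w : List C), ∀ v ∈ Vi, σ w v = αn (w.foldl αu m0) v

/-- Finite-memory of size at most `k`. -/
def IsFMSize (Vi : Set V) (σ : List C → V → V) (k : ℕ) : Prop :=
  ∃ (M : Type) (inst : Fintype M), @Fintype.card M inst ≤ k ∧
    ∃ (m0 : M) (αu : M → C → M) (αn : M → V → V),
      ∀ (w : List C), ∀ v ∈ Vi, σ w v = αn (w.foldl αu m0) v

/-- The hSPE conditions for the profile `(σ1, σ2)` at `(w, v)`. -/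
def hSPEAt (O : Arena V C) (W : Set (ℕ → C)) (σ1 σ2 : List C → V → V)
    (w : List C) (v : V) : Prop :=
  (O.play (O.combine σ1 σ2) w v ∈ W →
    ∀ σ2', O.Valid2 σ2' → O.play (O.combine σ1 σ2') w v ∈ W) ∧
  (O.play (O.combine σ1 σ2) w v ∉ W →
    ∀ σ1', O.Valid1 σ1' → O.play (O.combine σ1' σ2) w v ∉ W)

/-- Hypothetical subgame-perfect equilibrium: hSPE conditions at every `(w, v) ∈ C^* × V`. -/
def IsHSPE (O : Arena V C) (W : Set (ℕ → C)) (σ1 σ2 : List C → V → V) : Prop :=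
  O.Valid1 σ1 ∧ O.Valid2 σ2 ∧ ∀ (w : List C), ∀ v ∈ O.vertices, O.hSPEAt W σ1 σ2 w v

/-- Histories realizable in the arena: `w` is the color sequence of a path ending at `v`. -/
inductive Hist (O : Arena V C) : List C → V → Prop
  | base (v : V) (hv : v ∈ O.vertices) : Hist O [] v
  | step {w : List C} {v : V} (h : Hist O w v) {v' : V} (he : (v, v') ∈ O.E) :
      Hist O (w ++ [O.Γ v]) v'

/-- Subgame-perfect equilibrium: hSPE conditions at every realizable `(w, v)`. -/
def IsSPE (O : Arena V C) (W : Set (ℕ → C)) (σ1 σ2 : List C → V → V) : Prop :=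
  O.Valid1 σ1 ∧ O.Valid2 σ2 ∧ ∀ (w : List C) (v : V), O.Hist w v → O.hSPEAt W σ1 σ2 w v

/-- A game is regularly-predictable if for each vertex `v` a finite automaton recognizes
the histories from which Player 1 has a winning strategy at `v`. -/
def RegularlyPredictable (O : Arena V C) (W : Set (ℕ → C)) : Prop :=
  ∀ v ∈ O.vertices, ∃ (Q : Type) (_ : Fintype Q) (A : DFA C Q),
    ∀ w : List C, w ∈ A.accepts ↔ O.Wins1From W w v

/-- The game has a finite-memory hSPE. -/
def HasFMhSPE (O : Arena V C) (W : Set (ℕ → C)) : Prop :=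
  ∃ σ1 σ2, O.IsHSPE W σ1 σ2 ∧ IsFM O.V1 σ1 ∧ IsFM O.V2 σ2

/-- The game has a finite-memory SPE. -/
def HasFMSPE (O : Arena V C) (W : Set (ℕ → C)) : Prop :=
  ∃ σ1 σ2, O.IsSPE W σ1 σ2 ∧ IsFM O.V1 σ1 ∧ IsFM O.V2 σ2

end Arena

/-- The prefix of length `n` of an infinite sequence of colors. -/
def seqPrefix {C : Type} (ρ : ℕ → C) (n : ℕ) : List C := (List.range n).map ρ

/-- A language is regular if it is accepted by a DFA with a finite state set. -/
def IsRegularLang {C : Type} (L : Set (List C)) : Prop :=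
  ∃ (Q : Type) (_ : Fintype Q) (A : DFA C Q), ∀ w : List C, w ∈ A.accepts ↔ w ∈ L

/-- `Rl 𝒲 l`: winning conditions obtained as a Boolean combination of members of `𝒲`
and of `l` conditions `Pref(ρ) ∩ Lⱼ = ∅` with the `Lⱼ` regular. -/
def Rl {C : Type} (𝒲 : Set (Set (ℕ → C))) (l : ℕ) : Set (Set (ℕ → C)) :=
  { W' | ∃ (k : ℕ) (φ : (Fin k → Prop) → (Fin l → Prop) → Prop)
      (Ws : Fin k → Set (ℕ → C)) (Ls : Fin l → Set (List C)),
      (∀ i, Ws i ∈ 𝒲) ∧ (∀ j, IsRegularLang (Ls j)) ∧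
      W' = {ρ | φ (fun i => ρ ∈ Ws i) (fun j => ∀ n : ℕ, seqPrefix ρ n ∉ Ls j)} }

/-- Prepending a color to an infinite sequence. -/
def consSeq {C : Type} (c : C) (ρ : ℕ → C) : ℕ → C
  | 0 => c
  | n + 1 => ρ n

/-- The battery-like energy level sequence: `e 0 = 0`, `e (k+1) = min (e k + d k) b`. -/
def batteryLevel (d : ℕ → ℤ) (b : ℤ) : ℕ → ℤ
  | 0 => 0
  | k + 1 => min (batteryLevel d b k + d k) b

namespace S12
open Arena Classical
set_option linter.unusedSectionVars false

variable {V C : Type} [Fintype V]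

/-- default move -/
noncomputable def dflt (O : Arena V C) : V → V :=
  fun v => if h : ∃ u, (v, u) ∈ O.E then h.choose else v

lemma dflt_edge (O : Arena V C) (hwf : O.WF) {v : V} (hv : v ∈ O.vertices) :
    (v, dflt O v) ∈ O.E := by
  have h := hwf.2.2 v hv
  simp only [dflt, dif_pos h]
  exact h.choose_spec

lemma mem_V2_of_not_V1 (O : Arena V C) {v : V} (hv : v ∈ O.vertices) (h1 : v ∉ O.V1) :
    v ∈ O.V2 := by
  rcases hv with h | h
  · exact absurd h h1
  · exact h

lemma combine_valid (O : Arena V C) {σ1 σ2} (h1 : O.Valid1 σ1) (h2 : O.Valid2 σ2) :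
    ∀ w, ∀ v ∈ O.vertices, (v, O.combine σ1 σ2 w v) ∈ O.E := by
  intro w v hv
  by_cases hv1 : v ∈ O.V1
  · simpa [Arena.combine, hv1] using h1 w v hv1
  · simpa [Arena.combine, hv1] using h2 w v (mem_V2_of_not_V1 O hv hv1)

lemma combine_eq_of_not_V1 (O : Arena V C) (σ1 σ2) {v : V} (h1 : v ∉ O.V1) (w : List C) :
    O.combine σ1 σ2 w v = σ2 w v := by simp [Arena.combine, h1]

lemma combine_eq_of_V1 (O : Arena V C) (σ1 σ2) {v : V} (h1 : v ∈ O.V1) (w : List C) :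
    O.combine σ1 σ2 w v = σ1 w v := by simp [Arena.combine, h1]

/-- basic stepSeq facts -/
lemma stepSeq_succ (O : Arena V C) (σ) (w : List C) (v : V) (k : ℕ) :
    O.stepSeq σ w v (k+1) =
      ((O.stepSeq σ w v k).1 ++ [O.Γ (O.stepSeq σ w v k).2],
        σ (O.stepSeq σ w v k).1 (O.stepSeq σ w v k).2) := rfl

lemma stepSeq_fst_length (O : Arena V C) (σ) (w : List C) (v : V) (k : ℕ) :
    (O.stepSeq σ w v k).1.length = w.length + k := by
  induction k with
  | zero => rfl
  | succ k ih => simp [stepSeq_succ, ih]; omega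

/-- vertex sequence of a play from `([], v0)` -/
noncomputable def vseq (O : Arena V C) (σ : List C → V → V) (v0 : V) : ℕ → V :=
  fun k => (O.stepSeq σ [] v0 k).2

lemma vseq_zero (O : Arena V C) (σ) (v0 : V) : vseq O σ v0 0 = v0 := rfl

lemma stepSeq_fst (O : Arena V C) (σ) (v0 : V) (k : ℕ) :
    (O.stepSeq σ [] v0 k).1 = (List.range k).map (fun j => O.Γ (vseq O σ v0 j)) := by
  induction k with
  | zero => rfl
  | succ k ih => simp [stepSeq_succ, ih, List.range_succ, vseq]

lemma vseq_succ (O : Arena V C) (σ) (v0 : V) (k : ℕ) :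
    vseq O σ v0 (k+1) =
      σ ((List.range k).map (fun j => O.Γ (vseq O σ v0 j))) (vseq O σ v0 k) := by
  show (O.stepSeq σ [] v0 (k+1)).2 = _
  rw [stepSeq_succ, ← stepSeq_fst]
  rfl

lemma play_nil (O : Arena V C) (σ) (v0 : V) (i : ℕ) :
    O.play σ [] v0 i = O.Γ (vseq O σ v0 i) := by
  simp [Arena.play, vseq]

lemma seqPrefix_play_nil (O : Arena V C) (σ) (v0 : V) (k : ℕ) :
    seqPrefix (O.play σ [] v0) k = (O.stepSeq σ [] v0 k).1 := by
  simp [seqPrefix, stepSeq_fst, play_nil]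

/-- congruence up to a bound -/
lemma stepSeq_congr_upto (O : Arena V C) {σ σ' : List C → V → V} (w : List C) (v : V) (k : ℕ)
    (h : ∀ j < k, σ' (O.stepSeq σ w v j).1 (O.stepSeq σ w v j).2
        = σ (O.stepSeq σ w v j).1 (O.stepSeq σ w v j).2) :
    ∀ j ≤ k, O.stepSeq σ' w v j = O.stepSeq σ w v j := by
  intro j hj
  induction j with
  | zero => rfl
  | succ j ih =>
    have hj' : j ≤ k := Nat.le_of_succ_le hj
    have e := ih hj'
    rw [stepSeq_succ, stepSeq_succ, e, h j (Nat.lt_of_succ_le hj)]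

lemma stepSeq_congr (O : Arena V C) {σ σ' : List C → V → V} (w : List C) (v : V)
    (h : ∀ j, σ' (O.stepSeq σ w v j).1 (O.stepSeq σ w v j).2
        = σ (O.stepSeq σ w v j).1 (O.stepSeq σ w v j).2) :
    ∀ j, O.stepSeq σ' w v j = O.stepSeq σ w v j := by
  intro j
  exact stepSeq_congr_upto O w v j (fun i _ => h i) j le_rfl

lemma play_congr (O : Arena V C) {σ σ' : List C → V → V} (w : List C) (v : V)
    (h : ∀ j, σ' (O.stepSeq σ w v j).1 (O.stepSeq σ w v j).2
        = σ (O.stepSeq σ w v j).1 (O.stepSeq σ w v j).2) :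
    O.play σ' w v = O.play σ w v := by
  funext i
  simp only [Arena.play]
  rw [stepSeq_congr O w v h]

/-- shifting stepSeq -/
lemma stepSeq_shift (O : Arena V C) (σ) (w : List C) (v : V) (j : ℕ) :
    O.stepSeq σ w v (j+1) = O.stepSeq σ (w ++ [O.Γ v]) (σ w v) j := by
  induction j with
  | zero => rfl
  | succ j ih => rw [stepSeq_succ, ih, ← stepSeq_succ]

lemma play_step (O : Arena V C) (σ) (w : List C) (v : V) :
    O.play σ (w ++ [O.Γ v]) (σ w v) = O.play σ w v := by
  funext i
  simp only [Arena.play, List.length_append, List.length_singleton]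
  rcases lt_trichotomy i w.length with hi | hi | hi
  · rw [dif_pos (by omega), dif_pos hi]
    simp only [List.get_eq_getElem]
    exact List.getElem_append_left hi
  · subst hi
    rw [dif_pos (by omega), dif_neg (by omega)]
    simp [Arena.stepSeq]
  · rw [dif_neg (by omega), dif_neg (by omega)]
    have : i - w.length = (i - (w.length + 1)) + 1 := by omega
    rw [this, stepSeq_shift]

lemma play_stepSeq (O : Arena V C) (σ) (w : List C) (v : V) (k : ℕ) :
    O.play σ (O.stepSeq σ w v k).1 (O.stepSeq σ w v k).2 = O.play σ w v := by
  induction k with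
  | zero => rfl
  | succ k ih => rw [stepSeq_succ, play_step, ih]

/-- staying in the vertex set -/
lemma stepSeq_mem (O : Arena V C) (hwf : O.WF) {σ : List C → V → V}
    (hσ : ∀ w, ∀ v ∈ O.vertices, (v, σ w v) ∈ O.E) (w : List C) {v : V}
    (hv : v ∈ O.vertices) : ∀ k, (O.stepSeq σ w v k).2 ∈ O.vertices := by
  intro k
  induction k with
  | zero => exact hv
  | succ k ih =>
    rw [stepSeq_succ]
    exact (hwf.2.1 _ (hσ _ _ ih)).2

lemma play_eq_of_eqOn (O : Arena V C) (hwf : O.WF) {σ σ' : List C → V → V}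
    (hσ : ∀ w, ∀ v ∈ O.vertices, (v, σ w v) ∈ O.E)
    (hagree : ∀ w, ∀ v ∈ O.vertices, σ' w v = σ w v) (w : List C) {v : V}
    (hv : v ∈ O.vertices) : O.play σ' w v = O.play σ w v :=
  play_congr O w v (fun j => hagree _ _ (stepSeq_mem O hwf hσ w hv j))

end S12
namespace S12
set_option linter.unusedSectionVars false
open Classical

/-- König's lemma for finitely-branching prefix-closed trees of lists. -/
lemma konig {α : Type} [Fintype α] (T : Set (List α))
    (hpref : ∀ q ∈ T, ∀ k, q.take k ∈ T)
    (hne : ∀ k, ∃ q ∈ T, q.length = k) :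
    ∃ f : ℕ → α, ∀ k, (List.range k).map f ∈ T := by
  classical
  set B : Set (List α) := {q | ∀ k, ∃ r ∈ T, r.length = q.length + k ∧ q <+: r} with hB
  have hB0 : [] ∈ B := by
    intro k
    obtain ⟨r, hr, hl⟩ := hne k
    exact ⟨r, hr, by simpa using hl, List.nil_prefix⟩
  have hBT : ∀ q ∈ B, q ∈ T := by
    intro q hq
    obtain ⟨r, hr, hl, hp⟩ := hq 0
    have : q = r := List.IsPrefix.eq_of_length hp (by omega)
    exact this ▸ hr
  have hext : ∀ q ∈ B, ∃ a : α, q ++ [a] ∈ B := by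
    intro q hq
    by_contra hc
    push_neg at hc
    have hfail : ∀ a : α, ∃ m : ℕ, ∀ k ≥ m, ¬ ∃ r ∈ T, r.length = q.length + 1 + k ∧ q ++ [a] <+: r := by
      intro a
      have hca := hc a
      rw [hB, Set.mem_setOf_eq] at hca
      push_neg at hca
      obtain ⟨m, hm⟩ := hca
      refine ⟨m, fun k hk hex => ?_⟩
      obtain ⟨r, hr, hl, hp⟩ := hex
      have hlen1 : (q ++ [a]).length = q.length + 1 := by simp
      refine hm (r.take ((q ++ [a]).length + m)) (hpref r hr _) (by simp only [List.length_take]; omega) ?_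
      rw [List.prefix_take_iff]
      exact ⟨hp, by omega⟩
    choose m hm using hfail
    set K : ℕ := Finset.univ.sup m + 1 with hK
    obtain ⟨r, hr, hl, hp⟩ := hq K
    have hlen : q.length < r.length := by omega
    set a : α := r[q.length] with ha
    have hpa : q ++ [a] <+: r := by
      have h1 : r.take q.length = q := (List.prefix_iff_eq_take.mp hp).symm
      have h2 : r.take (q.length + 1) = r.take q.length ++ [r[q.length]] := by
        rw [List.take_succ, List.getElem?_eq_getElem hlen]
        rfl
      rw [List.prefix_iff_eq_take]
      simp only [List.length_append, List.length_singleton]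
      rw [h2, h1, ha]
    have hKm : K - 1 ≥ m a := by
      have := Finset.le_sup (f := m) (Finset.mem_univ a)
      omega
    exact hm a (K - 1) hKm ⟨r, hr, by omega, hpa⟩
  -- build the branch
  choose ext hextspec using hext
  let F : ℕ → {q : List α // q ∈ B} := fun n =>
    Nat.rec ⟨[], hB0⟩ (fun _ p => ⟨p.1 ++ [ext p.1 p.2], hextspec p.1 p.2⟩) n
  refine ⟨fun k => ext (F k).1 (F k).2, fun k => ?_⟩
  have key : ∀ k, (List.range k).map (fun k => ext (F k).1 (F k).2) = (F k).1 := by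
    intro k
    induction k with
    | zero => rfl
    | succ k ih => rw [List.range_succ, List.map_append, ih]; rfl
  rw [key]
  exact hBT _ (F k).2

end S12
namespace S12
set_option linter.unusedSectionVars false
set_option maxHeartbeats 1000000
open Arena Classical

variable {V C : Type} [Fintype V]

/-- fold a vertex list into (history, current vertex) starting at `([], v0)`. -/
def hv (O : Arena V C) (v0 : V) (q : List V) : List C × V :=
  q.foldl (fun p u => (p.1 ++ [O.Γ p.2], u)) ([], v0)

lemma hv_nil (O : Arena V C) (v0 : V) : hv O v0 [] = ([], v0) := rfl

lemma hv_snoc (O : Arena V C) (v0 : V) (q : List V) (u : V) :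
    hv O v0 (q ++ [u]) = ((hv O v0 q).1 ++ [O.Γ (hv O v0 q).2], u) := by
  simp [hv, List.foldl_append]

/-- the vertex list of the play of `σ` from `([], v0)` matches `stepSeq`. -/
lemma hv_vseq (O : Arena V C) (σ) (v0 : V) (k : ℕ) :
    hv O v0 ((List.range k).map (fun j => vseq O σ v0 (j+1))) = O.stepSeq σ [] v0 k := by
  induction k with
  | zero => rfl
  | succ k ih =>
    rw [List.range_succ, List.map_append, List.map_singleton, hv_snoc, ih, stepSeq_succ]
    have : vseq O σ v0 (k+1) = σ (O.stepSeq σ [] v0 k).1 (O.stepSeq σ [] v0 k).2 := rfl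
    rw [this]

lemma exists_bound (O : Arena V C) (hwf : O.WF) (W : Set (ℕ → C)) (L : Set (List C))
    {σ2 : List C → V → V} (hv2 : O.Valid2 σ2) {v0 : V} (h0 : v0 ∈ O.vertices)
    (hwin : O.Winning2 {ρ | ρ ∈ W ∨ ∀ n : ℕ, seqPrefix ρ n ∉ L} σ2 [] v0) :
    ∃ N : ℕ, ∀ σ1, O.Valid1 σ1 →
      ∃ n ≤ N, seqPrefix (O.play (O.combine σ1 σ2) [] v0) n ∈ L := by
  by_contra hc
  push_neg at hc
  -- the tree of σ2-consistent finite plays avoiding L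
  set Ok : List C × V → V → Prop :=
    fun p u => (p.2 ∈ O.V1 ∧ (p.2, u) ∈ O.E) ∨ (p.2 ∉ O.V1 ∧ u = σ2 p.1 p.2) with hOk
  set T : Set (List V) :=
    {q | (∀ i ≤ q.length, (hv O v0 (q.take i)).1 ∉ L) ∧
      ∀ i : ℕ, ∀ hi : i < q.length, Ok (hv O v0 (q.take i)) q[i]} with hT
  have hpref : ∀ q ∈ T, ∀ k, q.take k ∈ T := by
    intro q hq k
    constructor
    · intro i hi
      rw [List.take_take]
      apply hq.1
      simp at hi; omega
    · intro i hi
      simp only [List.length_take] at hi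
      rw [List.take_take, List.getElem_take]
      have h1 : min i k = i := by omega
      rw [h1]
      exact hq.2 i (by omega)
  have hne : ∀ k, ∃ q ∈ T, q.length = k := by
    intro k
    obtain ⟨σ1, hσ1, hL⟩ := hc k
    set σ := O.combine σ1 σ2 with hσ
    refine ⟨(List.range k).map (fun j => vseq O σ v0 (j+1)), ⟨?_, ?_⟩, by simp⟩
    · intro i hi
      simp only [List.length_map, List.length_range] at hi
      rw [← List.map_take, List.take_range, min_eq_left hi, hv_vseq]
      rw [← seqPrefix_play_nil]
      exact hL i hi
    · intro i hi
      simp only [List.length_map, List.length_range] at hi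
      rw [← List.map_take, List.take_range, min_eq_left (le_of_lt hi), hv_vseq]
      have hg : ((List.range k).map (fun j => vseq O σ v0 (j+1)))[i]'(by simpa using hi)
          = vseq O σ v0 (i+1) := by
        simp
      rw [hg]
      have hstep : vseq O σ v0 (i+1) = σ (O.stepSeq σ [] v0 i).1 (O.stepSeq σ [] v0 i).2 := rfl
      by_cases h1 : (O.stepSeq σ [] v0 i).2 ∈ O.V1
      · left
        refine ⟨h1, ?_⟩
        rw [hstep, hσ, combine_eq_of_V1 O σ1 σ2 h1]
        exact hσ1 _ _ h1
      · right
        refine ⟨h1, ?_⟩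
        rw [hstep, hσ, combine_eq_of_not_V1 O σ1 σ2 h1]
  obtain ⟨f, hf⟩ := konig T hpref hne
  -- build the strategy following the branch
  set σ1 : List C → V → V :=
    fun w u => if (u, f w.length) ∈ O.E then f w.length else dflt O u with hσ1
  have hval1 : O.Valid1 σ1 := by
    intro w u hu
    simp only [hσ1]
    split
    · assumption
    · exact dflt_edge O hwf (Or.inl hu)
  set σ := O.combine σ1 σ2 with hσ
  have hbr : ∀ k, O.stepSeq σ [] v0 k = hv O v0 ((List.range k).map f) := by
    intro k
    induction k with
    | zero => rfl
    | succ k ih =>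
      have hmem := hf (k+1)
      have hok : Ok (hv O v0 (((List.range (k+1)).map f).take k))
          (((List.range (k+1)).map f)[k]'(by simp)) :=
        hmem.2 k (by simp)
      rw [← List.map_take, List.take_range, min_eq_left (by omega)] at hok
      have hgk : (((List.range (k+1)).map f)[k]'(by simp)) = f k := by simp
      rw [hgk] at hok
      rw [List.range_succ, List.map_append, List.map_singleton, hv_snoc, ← ih, stepSeq_succ]
      have hlen : (O.stepSeq σ [] v0 k).1.length = k := by
        simpa using stepSeq_fst_length O σ [] v0 k
      rw [← ih] at hok
      have hmv : σ (O.stepSeq σ [] v0 k).1 (O.stepSeq σ [] v0 k).2 = f k := by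
        rcases hok with ⟨h1, he⟩ | ⟨h1, he⟩
        · rw [hσ, combine_eq_of_V1 O σ1 σ2 h1, hσ1]
          simp only [hlen]
          have hlen' : (O.stepSeq (O.combine (fun w u => if (u, f w.length) ∈ O.E then f w.length else dflt O u) σ2) [] v0 k).1.length = k := hlen
          rw [hlen', if_pos he]
        · rw [hσ, combine_eq_of_not_V1 O σ1 σ2 h1, ← he]
      rw [hmv]
  have hplay : O.play σ [] v0 ∈ {ρ | ρ ∈ W ∨ ∀ n : ℕ, seqPrefix ρ n ∉ L} := by
    right
    intro n
    rw [seqPrefix_play_nil, hbr n]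
    have := (hf n).1 n (by simp)
    rwa [List.take_of_length_le (by simp)] at this
  exact hwin σ1 hval1 hplay

end S12
namespace S12
set_option linter.unusedSectionVars false
set_option maxHeartbeats 1000000
open Arena Classical

variable {V C : Type} [Fintype V]

/-- Player 2's strategy remains winning at every position consistent with it. -/
lemma winning_at_pos (O : Arena V C) {W' : Set (ℕ → C)} {σ2 : List C → V → V}
    {v0 : V} (hwin : O.Winning2 W' σ2 [] v0) {σ1 : List C → V → V}
    (hval1 : O.Valid1 σ1) (k : ℕ) :
    O.Winning2 W' σ2 (O.stepSeq (O.combine σ1 σ2) [] v0 k).1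
      (O.stepSeq (O.combine σ1 σ2) [] v0 k).2 := by
  intro σ1' hσ1'
  set σ := O.combine σ1 σ2 with hσ
  set σ1'' : List C → V → V := fun w u => if w.length < k then σ1 w u else σ1' w u with hσ1''
  have hval'' : O.Valid1 σ1'' := by
    intro w u hu
    simp only [hσ1'']
    split
    · exact hval1 w u hu
    · exact hσ1' w u hu
  set σ'' := O.combine σ1'' σ2 with hσ''
  -- the two profiles agree up to time k
  have hupto : ∀ j ≤ k, O.stepSeq σ'' [] v0 j = O.stepSeq σ [] v0 j := by
    apply stepSeq_congr_upto
    intro j hj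
    have hlen : (O.stepSeq σ [] v0 j).1.length = j := by
      simpa using stepSeq_fst_length O σ [] v0 j
    by_cases h1 : (O.stepSeq σ [] v0 j).2 ∈ O.V1
    · rw [hσ'', hσ, combine_eq_of_V1 O _ _ h1, combine_eq_of_V1 O _ _ h1, hσ1'']
      simp only [hlen]
      have hlen' : (O.stepSeq (O.combine σ1 σ2) [] v0 j).1.length = j := hlen
      rw [hlen', if_pos hj]
    · rw [hσ'', hσ, combine_eq_of_not_V1 O _ _ h1, combine_eq_of_not_V1 O _ _ h1]
  have hk := hupto k le_rfl
  -- beyond time k the profile with σ1'' agrees with σ1'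
  have hafter : O.play σ'' (O.stepSeq σ [] v0 k).1 (O.stepSeq σ [] v0 k).2
      = O.play (O.combine σ1' σ2) (O.stepSeq σ [] v0 k).1 (O.stepSeq σ [] v0 k).2 := by
    apply play_congr
    intro j
    set p := O.stepSeq (O.combine σ1' σ2) (O.stepSeq σ [] v0 k).1 (O.stepSeq σ [] v0 k).2 j
      with hp
    have hlen : p.1.length = k + j := by
      rw [hp, stepSeq_fst_length]
      simp [stepSeq_fst_length O σ [] v0 k]
    by_cases h1 : p.2 ∈ O.V1
    · rw [hσ'', combine_eq_of_V1 O _ _ h1, combine_eq_of_V1 O _ _ h1, hσ1'']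
      simp only [hlen]
      rw [if_neg (by omega)]
    · rw [hσ'', combine_eq_of_not_V1 O _ _ h1, combine_eq_of_not_V1 O _ _ h1]
  rw [← hafter, ← hk, play_stepSeq]
  exact hwin σ1'' hval''

end S12
namespace S12
set_option linter.unusedSectionVars false
set_option maxHeartbeats 1000000
open Arena Classical
attribute [local instance] Classical.propDecidable

variable {V C : Type} [Fintype V]

/-- encoding colors by vertices -/
noncomputable def code (O : Arena V C) : C → Option V :=
  fun c => if h : ∃ v, O.Γ v = c then some h.choose else none

noncomputable def dec (O : Arena V C) (c0 : C) : Option V → C :=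
  fun o => o.elim c0 O.Γ

lemma dec_code (O : Arena V C) (c0 : C) {c : C} (h : ∃ v, O.Γ v = c) :
    dec O c0 (code O c) = c := by
  simp only [code, dif_pos h, dec]
  exact h.choose_spec

noncomputable def codeL (O : Arena V C) : List C → List (Option V) := List.map (code O)

noncomputable def decL (O : Arena V C) (c0 : C) : List (Option V) → List C :=
  List.map (dec O c0)

lemma decL_codeL (O : Arena V C) (c0 : C) {w : List C} (h : ∀ c ∈ w, ∃ v, O.Γ v = c) :
    decL O c0 (codeL O w) = w := by
  simp only [decL, codeL, List.map_map]
  have hc : ∀ c ∈ w, (dec O c0 ∘ code O) c = id c := fun c hc => dec_code O c0 (h c hc)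
  rw [List.map_congr_left hc, List.map_id]

/-- bounded-length coded histories -/
def M1 (V : Type) (N : ℕ) : Type := {l : List (Option V) // l.length ≤ N}

noncomputable instance (N : ℕ) : Fintype (M1 V N) := by
  apply Fintype.ofInjective (fun l : M1 V N => (fun i : Fin (N+1) => l.1[(i:ℕ)]?))
  intro a b hab
  apply Subtype.ext
  apply List.ext_getElem?
  intro n
  have ha := a.2
  have hb := b.2
  by_cases hn : n < N + 1
  · exact congr_fun hab ⟨n, hn⟩
  · rw [List.getElem?_eq_none (by omega), List.getElem?_eq_none (by omega)]

/-- a family of Moore machines indexed by positions -/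
structure Fam (V C : Type) where
  Mach : List C × V → Type
  ft : ∀ p, Fintype (Mach p)
  m0 : ∀ p, Mach p
  au : ∀ p, Mach p → C → Mach p
  an : ∀ p, Mach p → V → V

def Fam.strat (F : Fam V C) (p : List C × V) : List C → V → V :=
  fun w v => F.an p (w.foldl (F.au p) (F.m0 p)) v

variable (O : Arena V C) (F : Fam V C) (c0 : C) (N : ℕ)

/-- union machine state -/
def MachU : Type := Σ q : M1 V N × V, F.Mach (decL O c0 q.1.1, q.2)

noncomputable instance : Fintype (MachU O F c0 N) := by
  haveI : ∀ p, Fintype (F.Mach p) := F.ft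
  unfold MachU
  infer_instance

noncomputable def auU (sm : MachU O F c0 N) (c : C) : MachU O F c0 N := ⟨sm.1, F.au _ sm.2 c⟩

noncomputable def anU (sm : MachU O F c0 N) (v : V) : V := F.an _ sm.2 v

noncomputable def m0U (q : M1 V N × V) : MachU O F c0 N :=
  ⟨q, (decL O c0 q.1.1).foldl (F.au _) (F.m0 _)⟩

noncomputable def consStepU (sm : Finset V × MachU O F c0 N) (c : C) :
    Finset V × MachU O F c0 N :=
  (Finset.univ.filter (fun v' => ∃ v ∈ sm.1, O.Γ v = c ∧
      ((v ∈ O.V1 ∧ (v, v') ∈ O.E) ∨ (v ∉ O.V1 ∧ v' = anU O F c0 N sm.2 v))),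
    auU O F c0 N sm.2 c)

noncomputable def compU (q : M1 V N × V) (s : List C) : Finset V × MachU O F c0 N :=
  s.foldl (consStepU O F c0 N) ({q.2}, m0U O F c0 N q)

lemma compU_nil (q : M1 V N × V) : compU O F c0 N q [] = ({q.2}, m0U O F c0 N q) := rfl

lemma compU_snoc (q : M1 V N × V) (s : List C) (c : C) :
    compU O F c0 N q (s ++ [c]) = consStepU O F c0 N (compU O F c0 N q s) c := by
  simp [compU, List.foldl_append]

lemma compU_snd (q : M1 V N × V) (s : List C) :
    (compU O F c0 N q s).2
      = ⟨q, (decL O c0 q.1.1 ++ s).foldl (F.au _) (F.m0 _)⟩ := by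
  induction s using List.reverseRecOn with
  | nil => rw [compU_nil, List.append_nil]; rfl
  | append_singleton s c ih =>
    rw [compU_snoc]
    show auU O F c0 N (compU O F c0 N q s).2 c = _
    rw [ih]
    conv_rhs => rw [← List.append_assoc, List.foldl_append, List.foldl_cons, List.foldl_nil]
    rfl

lemma mem_compU_snoc (q : M1 V N × V) (s : List C) (c : C) (v' : V) :
    v' ∈ (compU O F c0 N q (s ++ [c])).1 ↔
      ∃ v ∈ (compU O F c0 N q s).1, O.Γ v = c ∧
        ((v ∈ O.V1 ∧ (v, v') ∈ O.E) ∨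
          (v ∉ O.V1 ∧ v' = anU O F c0 N (compU O F c0 N q s).2 v)) := by
  rw [compU_snoc]
  show v' ∈ Finset.filter _ _ ↔ _
  rw [Finset.mem_filter]
  simp only [Finset.mem_univ, true_and]

/-- soundness: members of the cons set are reachable by a pseudo-play. -/
lemma compU_sound (q : M1 V N × V) : ∀ (s : List C), ∀ v' ∈ (compU O F c0 N q s).1,
    ∃ g : ℕ → V, g 0 = q.2 ∧ g s.length = v' ∧
      (∀ j, ∀ hj : j < s.length, O.Γ (g j) = s[j]) ∧
      (∀ j, j < s.length → (g j ∈ O.V1 ∧ (g j, g (j+1)) ∈ O.E) ∨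
        (g j ∉ O.V1 ∧ g (j+1) = anU O F c0 N (compU O F c0 N q (s.take j)).2 (g j))) := by
  intro s
  induction s using List.reverseRecOn with
  | nil =>
    intro v' hv'
    rw [compU_nil] at hv'
    simp only [Finset.mem_singleton] at hv'
    exact ⟨fun _ => q.2, rfl, by simp [hv'], by simp, by simp⟩
  | append_singleton s c ih =>
    intro v' hv'
    rw [mem_compU_snoc] at hv'
    obtain ⟨v, hvmem, hvc, hcl⟩ := hv'
    obtain ⟨g, hg0, hgl, hgc, hgm⟩ := ih v hvmem
    refine ⟨fun j => if j = s.length + 1 then v' else g j, by simp [hg0], by simp, ?_, ?_⟩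
    · intro j hj
      simp only [List.length_append, List.length_singleton] at hj
      dsimp only
      by_cases hjs : j < s.length
      · rw [if_neg (by omega), List.getElem_append_left hjs]
        exact hgc j hjs
      · have hje : j = s.length := by omega
        subst hje
        rw [if_neg (by omega), hgl, List.getElem_append_right (by omega)]
        simpa using hvc
    · intro j hj
      simp only [List.length_append, List.length_singleton] at hj
      dsimp only
      by_cases hjs : j < s.length
      · rw [if_neg (by omega), if_neg (by omega),
          List.take_append_of_le_length (by omega)]
        exact hgm j hjs
      · have hje : j = s.length := by omega
        subst hje
        rw [if_neg (by omega), if_pos rfl, hgl,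
          List.take_append_of_le_length (by omega), List.take_length]
        exact hcl

/-- the full memory -/
def MState : Type := M1 V N ⊕ (M1 V N × (V → Finset V × MachU O F c0 N))

noncomputable instance : Fintype (MState O F c0 N) := by
  unfold MState
  infer_instance

noncomputable def au0 : MState O F c0 N → C → MState O F c0 N
  | .inl l, c =>
    if h : l.1.length + 1 = N then
      .inr (⟨l.1 ++ [code O c], by simp; omega⟩,
        fun u => ({u}, m0U O F c0 N (⟨l.1 ++ [code O c], by simp; omega⟩, u)))
    else if h2 : l.1.length + 1 ≤ N then .inl ⟨l.1 ++ [code O c], by simpa using h2⟩ else .inl l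
  | .inr (l, f), c => .inr (l, fun u => consStepU O F c0 N (f u) c)

noncomputable def m00 : MState O F c0 N :=
  if N = 0 then
    .inr (⟨[], by simp⟩, fun u => ({u}, m0U O F c0 N (⟨[], by simp⟩, u)))
  else .inl ⟨[], by simp⟩

lemma state_spec_lt (w : List C) (h : w.length < N) :
    w.foldl (au0 O F c0 N) (m00 O F c0 N) = .inl ⟨codeL O w, by simp [codeL]; omega⟩ := by
  induction w using List.reverseRecOn with
  | nil =>
    simp only [List.foldl_nil, m00]
    exact if_neg (show ¬ N = 0 by simp at h; omega)
  | append_singleton w c ih =>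
    simp only [List.length_append, List.length_singleton] at h
    rw [List.foldl_append, List.foldl_cons, List.foldl_nil, ih (by omega)]
    show au0 O F c0 N (.inl _) c = _
    simp only [au0]
    have e1 : ¬ (codeL O w).length + 1 = N := by simp [codeL]; omega
    have e2 : (codeL O w).length + 1 ≤ N := by simp [codeL]; omega
    refine (dif_neg e1).trans ((dif_pos e2).trans ?_)
    exact congrArg Sum.inl (Subtype.ext (by simp [codeL]))

lemma state_spec_ge (w : List C) (h : N ≤ w.length) :
    ∃ l : M1 V N, l.1 = codeL O (w.take N) ∧
      w.foldl (au0 O F c0 N) (m00 O F c0 N)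
        = .inr (l, fun u => compU O F c0 N (l, u) (w.drop N)) := by
  induction w using List.reverseRecOn with
  | nil =>
    have hN : N = 0 := by simpa using h
    subst hN
    refine ⟨⟨[], by simp⟩, by simp [codeL], ?_⟩
    simp only [List.foldl_nil, m00, if_pos rfl]
    rfl
  | append_singleton w c ih =>
    simp only [List.length_append, List.length_singleton] at h
    rw [List.foldl_append, List.foldl_cons, List.foldl_nil]
    by_cases h2 : N ≤ w.length
    · obtain ⟨l, hl, heq⟩ := ih h2
      rw [heq]
      refine ⟨l, ?_, ?_⟩
      · rw [hl, List.take_append_of_le_length h2]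
      · rw [List.drop_append_of_le_length h2]
        show Sum.inr _ = _
        congr 1
        refine congrArg _ (funext fun u => ?_)
        rw [compU_snoc]
    · have h3 : w.length + 1 = N := by omega
      rw [state_spec_lt O F c0 N w (by omega)]
      refine ⟨⟨codeL O w ++ [code O c], by simp [codeL]; omega⟩, ?_, ?_⟩
      · rw [List.take_of_length_le (by simp; omega)]
        simp [codeL]
      · show au0 O F c0 N (.inl _) c = _
        simp only [au0]
        have e1 : (codeL O w).length + 1 = N := by simp [codeL]; omega
        refine (dif_pos e1).trans ?_
        have hd : List.drop N (w ++ [c]) = [] := List.drop_eq_nil_of_le (by simp; omega)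
        rw [hd]
        rfl

end S12
namespace S12
set_option linter.unusedSectionVars false
set_option maxHeartbeats 1000000
open Arena Classical
attribute [local instance] Classical.propDecidable

variable {V C : Type} [Fintype V]

noncomputable def selIdx (eV : V ≃ Fin (Fintype.card V)) (S : Finset V) (hS : S.Nonempty) : V :=
  eV.symm ((S.image eV).min' (hS.image eV))

lemma selIdx_mem (eV : V ≃ Fin (Fintype.card V)) (S : Finset V) (hS : S.Nonempty) :
    selIdx eV S hS ∈ S := by
  have := Finset.min'_mem (S.image eV) (hS.image eV)
  rw [Finset.mem_image] at this
  obtain ⟨u, hu, he⟩ := this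
  have : eV.symm (eV u) = u := eV.symm_apply_apply u
  rw [selIdx, ← he, this]
  exact hu

lemma selIdx_min (eV : V ≃ Fin (Fintype.card V)) (S : Finset V) (hS : S.Nonempty)
    {u : V} (hu : u ∈ S) : ((S.image eV).min' (hS.image eV) : Fin (Fintype.card V)) ≤ eV u :=
  Finset.min'_le _ _ (Finset.mem_image_of_mem eV hu)

variable (O : Arena V C) (F : Fam V C) (c0 : C) (N : ℕ)
variable (W : Set (ℕ → C)) (σ2 : List C → V → V) (eV : V ≃ Fin (Fintype.card V))

noncomputable def SFil (l : M1 V N) (f : V → Finset V × MachU O F c0 N) (v : V) : Finset V :=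
  Finset.univ.filter fun u => v ∈ (f u).1 ∧ u ∈ O.vertices ∧ O.Wins2From W (decL O c0 l.1) u

lemma mem_SFil (l : M1 V N) (f : V → Finset V × MachU O F c0 N) (v u : V) :
    u ∈ SFil O F c0 N W l f v ↔
      v ∈ (f u).1 ∧ u ∈ O.vertices ∧ O.Wins2From W (decL O c0 l.1) u := by
  rw [SFil, Finset.mem_filter]
  simp only [Finset.mem_univ, true_and]

noncomputable def an0 : MState O F c0 N → V → V
  | .inl l, v => σ2 (decL O c0 l.1) v
  | .inr (l, f), v =>
    if hS : (SFil O F c0 N W l f v).Nonempty then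
      anU O F c0 N (f (selIdx eV _ hS)).2 v
    else dflt O v

lemma an0_inl (l : M1 V N) (v : V) :
    an0 O F c0 N W σ2 eV (.inl l) v = σ2 (decL O c0 l.1) v := rfl

lemma an0_inr (l : M1 V N) (f : V → Finset V × MachU O F c0 N) (v : V) :
    an0 O F c0 N W σ2 eV (.inr (l, f)) v =
      if hS : (SFil O F c0 N W l f v).Nonempty then
        anU O F c0 N (f (selIdx eV _ hS)).2 v
      else dflt O v := rfl

/-- the combined finite-memory strategy -/
noncomputable def sigma' : List C → V → V :=
  fun w v => an0 O F c0 N W σ2 eV (w.foldl (au0 O F c0 N) (m00 O F c0 N)) v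

lemma sigma'_isFM : Arena.IsFM O.V2 (sigma' O F c0 N W σ2 eV) :=
  ⟨MState O F c0 N, inferInstance, m00 O F c0 N, au0 O F c0 N, an0 O F c0 N W σ2 eV,
    fun _ _ _ => rfl⟩

lemma sigma'_valid (hwf : O.WF) (hval2 : O.Valid2 σ2)
    (hA : ∀ p : List C × V, ∀ w : List C, ∀ v ∈ O.V2,
      (v, F.an p (w.foldl (F.au p) (F.m0 p)) v) ∈ O.E) :
    O.Valid2 (sigma' O F c0 N W σ2 eV) := by
  intro w v hv
  rw [sigma']
  by_cases hlen : w.length < N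
  · rw [state_spec_lt O F c0 N w hlen]
    exact hval2 (decL O c0 (codeL O w)) v hv
  · obtain ⟨l, hl, heq⟩ := state_spec_ge O F c0 N w (by omega)
    rw [heq, an0_inr]
    split
    · next hS =>
      rw [compU_snd]
      show (v, F.an _ _ v) ∈ O.E
      exact hA _ _ v hv
    · exact dflt_edge O hwf (Or.inr hv)

end S12
namespace S12
set_option linter.unusedSectionVars false
set_option maxHeartbeats 1000000
open Arena Classical
attribute [local instance] Classical.propDecidable

variable {V C : Type} [Fintype V]

lemma take_range_map {α : Type} (f : ℕ → α) {k k' : ℕ} (h : k ≤ k') :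
    ((List.range k').map f).take k = (List.range k).map f := by
  rw [← List.map_take, List.take_range, min_eq_left h]

lemma getElem_range_map {α : Type} (f : ℕ → α) {k i : ℕ} (h : i < k) :
    ((List.range k).map f)[i]'(by simpa using h) = f i := by
  simp

lemma anU_compU {V C : Type} [Fintype V] (O : Arena V C) (F : Fam V C) (c0 : C) (N : ℕ)
    (q : M1 V N × V) (s : List C) (v : V) :
    anU O F c0 N (compU O F c0 N q s).2 v
      = F.strat (decL O c0 q.1.1, q.2) (decL O c0 q.1.1 ++ s) v := by
  rw [compU_snd]
  rfl

lemma main_win (O : Arena V C) (hwf : O.WF) (W : Set (ℕ → C)) (L : Set (List C))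
    (σ2 : List C → V → V) (hval2 : O.Valid2 σ2) (v0 : V) (hv0 : v0 ∈ O.vertices)
    (hwin2 : O.Winning2 {ρ | ρ ∈ W ∨ ∀ n : ℕ, seqPrefix ρ n ∉ L} σ2 [] v0)
    (N : ℕ)
    (hN : ∀ σ1, O.Valid1 σ1 → ∃ n ≤ N, seqPrefix (O.play (O.combine σ1 σ2) [] v0) n ∈ L)
    (c0 : C) (F : Fam V C)
    (hA : ∀ p : List C × V, ∀ w : List C, ∀ v ∈ O.V2,
      (v, F.an p (w.foldl (F.au p) (F.m0 p)) v) ∈ O.E)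
    (hB : ∀ p : List C × V, p.2 ∈ O.vertices → O.Wins2From W p.1 p.2 →
      O.Winning2 W (F.strat p) p.1 p.2)
    (eV : V ≃ Fin (Fintype.card V)) :
    O.Winning2 {ρ | ρ ∈ W ∨ ∀ n : ℕ, seqPrefix ρ n ∉ L} (sigma' O F c0 N W σ2 eV) [] v0 := by
  intro σ1 hσ1
  set σ' := sigma' O F c0 N W σ2 eV with hσ'def
  have hval' : O.Valid2 σ' := sigma'_valid O F c0 N W σ2 eV hwf hval2 hA
  set σc := O.combine σ1 σ' with hσc
  set σo := O.combine σ1 σ2 with hσo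
  -- histories of the actual play
  set φ : ℕ → V := vseq O σc v0 with hφ
  have hw : ∀ k, (O.stepSeq σc [] v0 k).1 = (List.range k).map (fun j => O.Γ (φ j)) :=
    stepSeq_fst O σc v0
  have hdecode : ∀ k, decL O c0 (codeL O ((List.range k).map (fun j => O.Γ (φ j))))
      = (List.range k).map (fun j => O.Γ (φ j)) := by
    intro k
    apply decL_codeL
    intro c hc
    rw [List.mem_map] at hc
    obtain ⟨j, _, hj⟩ := hc
    exact ⟨φ j, hj⟩
  have hvert : ∀ k, φ k ∈ O.vertices :=
    stepSeq_mem O hwf (combine_valid O hσ1 hval') [] hv0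
  -- agreement with the σ2-profile up to time N
  have hagree : ∀ j ≤ N, O.stepSeq σc [] v0 j = O.stepSeq σo [] v0 j := by
    apply stepSeq_congr_upto
    intro j hj
    have hlen : (O.stepSeq σo [] v0 j).1.length = j := by
      simpa using stepSeq_fst_length O σo [] v0 j
    have hlen2 : (O.stepSeq (O.combine σ1 σ2) [] v0 j).1.length = j := hlen
    by_cases h1 : (O.stepSeq σo [] v0 j).2 ∈ O.V1
    · rw [hσc, hσo, combine_eq_of_V1 O _ _ h1, combine_eq_of_V1 O _ _ h1]
    · rw [hσc, hσo, combine_eq_of_not_V1 O _ _ h1, combine_eq_of_not_V1 O _ _ h1,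
        hσ'def, sigma', stepSeq_fst O (O.combine σ1 σ2) v0 j,
        state_spec_lt O F c0 N _ (by simpa using hj)]
      show σ2 (decL O c0 (codeL O _)) _ = _
      rw [decL_codeL O c0 (w := (List.range j).map (fun j => O.Γ (vseq O (O.combine σ1 σ2) v0 j))) (by
          intro c hc
          rw [List.mem_map] at hc
          obtain ⟨i, _, hi⟩ := hc
          exact ⟨vseq O (O.combine σ1 σ2) v0 i, hi⟩)]
  -- the play hits L
  have hhit : ∃ n, seqPrefix (O.play σc [] v0) n ∈ L := by
    obtain ⟨n, hn, hmem⟩ := hN σ1 hσ1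
    refine ⟨n, ?_⟩
    rw [seqPrefix_play_nil, hagree n hn, ← seqPrefix_play_nil]
    exact hmem
  -- the play avoids W
  have havoid : O.play σc [] v0 ∉ W := by
    set wk : ℕ → List C := fun k => (List.range k).map (fun j => O.Γ (φ j)) with hwk
    have hwklen : ∀ k, (wk k).length = k := by intro k; simp [hwk]
    set wN : List C := wk N with hwNdef
    have hlNle : (codeL O wN).length ≤ N := by simp [codeL, hwNdef, hwklen]
    set lN : M1 V N := ⟨codeL O wN, hlNle⟩ with hlNdef
    have hD : decL O c0 lN.1 = wN := hdecode N
    have hwk_take : ∀ j k, j ≤ k → (wk k).take j = wk j := by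
      intro j k hjk
      rw [hwk]
      exact take_range_map _ hjk
    have hwk_succ : ∀ k, wk (k+1) = wk k ++ [O.Γ (φ k)] := by
      intro k
      rw [hwk]
      simp [List.range_succ]
    have hdrop_succ : ∀ k, N ≤ k → (wk (k+1)).drop N = (wk k).drop N ++ [O.Γ (φ k)] := by
      intro k hk
      rw [hwk_succ k]
      exact List.drop_append_of_le_length (by rw [hwklen]; omega)
    have hdropN : (wk N).drop N = [] := List.drop_eq_nil_of_le (by rw [hwklen])
    -- the memory state at times k ≥ N
    have hstate : ∀ k, N ≤ k → (wk k).foldl (au0 O F c0 N) (m00 O F c0 N)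
        = .inr (lN, fun u => compU O F c0 N (lN, u) ((wk k).drop N)) := by
      intro k hk
      obtain ⟨l, hl, heq⟩ := state_spec_ge O F c0 N (wk k) (by rw [hwklen]; omega)
      have hleq : l = lN := Subtype.ext (by rw [hl, hwk_take N k hk])
      rw [heq, hleq]
    -- the move of the combined strategy at k ≥ N
    have hmove : ∀ k, N ≤ k → φ k ∉ O.V1 → φ (k+1)
        = an0 O F c0 N W σ2 eV
          (.inr (lN, fun u => compU O F c0 N (lN, u) ((wk k).drop N))) (φ k) := by
      intro k hk h1
      have h2 : φ (k+1) = σc (wk k) (φ k) := vseq_succ O σc v0 k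
      rw [h2, hσc, combine_eq_of_not_V1 O _ _ h1, hσ'def, sigma', hstate k hk]
    -- the candidate sets
    set SQ : ℕ → Finset V := fun k =>
      SFil O F c0 N W lN (fun u => compU O F c0 N (lN, u) ((wk k).drop N)) (φ k) with hSQ
    have hmemSQ : ∀ k u, u ∈ SQ k ↔ (φ k ∈ (compU O F c0 N (lN, u) ((wk k).drop N)).1
        ∧ u ∈ O.vertices ∧ O.Wins2From W wN u) := by
      intro k u
      rw [hSQ]
      rw [mem_SFil, hD]
    -- base facts at time N
    have hw' : ∀ k, (O.stepSeq σc [] v0 k).1 = wk k := fun k => hw k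
    have hQualN : O.Wins2From W wN (φ N) := by
      refine ⟨σ2, hval2, fun σ1x hx hWmem => ?_⟩
      have h1 := winning_at_pos O hwin2 hσ1 N
      rw [← hσo, ← hagree N le_rfl, hw'] at h1
      exact h1 σ1x hx (Or.inl hWmem)
    have hsucc : ∀ k, φ (k+1) = σc (wk k) (φ k) := fun k => vseq_succ O σc v0 k
    have hSQN : φ N ∈ SQ N := by
      rw [hmemSQ]
      refine ⟨?_, hvert N, hQualN⟩
      rw [hdropN, compU_nil]
      exact Finset.mem_singleton_self _
    have hstepV1 : ∀ k, N ≤ k → φ k ∈ O.V1 → ∀ u ∈ SQ k, u ∈ SQ (k+1) := by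
      intro k hk h1 u hu
      rw [hmemSQ] at hu ⊢
      obtain ⟨hc1, hc2, hc3⟩ := hu
      refine ⟨?_, hc2, hc3⟩
      rw [hdrop_succ k hk, mem_compU_snoc]
      refine ⟨φ k, hc1, rfl, Or.inl ⟨h1, ?_⟩⟩
      rw [hsucc k, hσc, combine_eq_of_V1 O _ _ h1]
      exact hσ1 _ _ h1
    have hstepSel : ∀ k, N ≤ k → φ k ∉ O.V1 → ∀ hS : (SQ k).Nonempty,
        selIdx eV (SQ k) hS ∈ SQ (k+1) := by
      intro k hk h1 hS
      have hu := selIdx_mem eV (SQ k) hS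
      rw [hmemSQ] at hu ⊢
      obtain ⟨hc1, hc2, hc3⟩ := hu
      refine ⟨?_, hc2, hc3⟩
      rw [hdrop_succ k hk, mem_compU_snoc]
      refine ⟨φ k, hc1, rfl, Or.inr ⟨h1, ?_⟩⟩
      rw [hmove k hk h1, an0_inr]
      split
      · rfl
      · next hS' => exact absurd hS hS'
    have hSQne : ∀ k, N ≤ k → (SQ k).Nonempty := by
      intro k hk
      induction k, hk using Nat.le_induction with
      | base => exact ⟨φ N, hSQN⟩
      | succ k hk ih =>
        by_cases h1 : φ k ∈ O.V1
        · obtain ⟨u, hu⟩ := ih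
          exact ⟨u, hstepV1 k hk h1 u hu⟩
        · exact ⟨_, hstepSel k hk h1 ih⟩
    set mval : ℕ → ℕ := fun k => if hS : (SQ k).Nonempty then
        (((SQ k).image eV).min' (hS.image eV) : Fin (Fintype.card V)).val else 0 with hmval
    have hmval_eq : ∀ k (hS : (SQ k).Nonempty),
        mval k = (((SQ k).image eV).min' (hS.image eV) : Fin (Fintype.card V)).val := by
      intro k hS
      rw [hmval]
      dsimp only
      rw [dif_pos hS]
    have hsel_val : ∀ k (hS : (SQ k).Nonempty), (eV (selIdx eV (SQ k) hS)).val = mval k := by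
      intro k hS
      rw [selIdx, Equiv.apply_symm_apply, hmval_eq k hS]
    have hmono : ∀ k, N ≤ k → mval (k+1) ≤ mval k := by
      intro k hk
      have hS := hSQne k hk
      have hS' := hSQne (k+1) (by omega)
      have hmem1 : selIdx eV (SQ k) hS ∈ SQ (k+1) := by
        by_cases h1 : φ k ∈ O.V1
        · exact hstepV1 k hk h1 _ (selIdx_mem eV _ hS)
        · exact hstepSel k hk h1 hS
      have h2 := selIdx_min eV (SQ (k+1)) hS' hmem1
      rw [hmval_eq (k+1) hS', ← hsel_val k hS]
      exact h2
    have hstab : ∃ K, N ≤ K ∧ ∀ k, K ≤ k → mval k = mval K := by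
      have hne : {m | ∃ k, N ≤ k ∧ mval k = m}.Nonempty := ⟨mval N, N, le_rfl, rfl⟩
      obtain ⟨K, hKN, hKval⟩ := Nat.sInf_mem hne
      refine ⟨K, hKN, fun k hk => ?_⟩
      have h1 : ∀ k', K ≤ k' → mval k' ≤ mval K := by
        intro k' hk'
        induction k', hk' using Nat.le_induction with
        | base => exact le_rfl
        | succ k' hk' ih => exact le_trans (hmono k' (by omega)) ih
      have h2 : sInf {m | ∃ k, N ≤ k ∧ mval k = m} ≤ mval k :=
        Nat.sInf_le ⟨k, by omega, rfl⟩
      rw [hKval]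
      exact le_antisymm (le_trans (h1 k hk) (le_of_eq hKval)) h2
    obtain ⟨K, hKN, hKconst⟩ := hstab
    have hSK := hSQne K hKN
    set ud : V := selIdx eV (SQ K) hSK with hud
    have hsel_eq : ∀ k (hk : K ≤ k) (hS : (SQ k).Nonempty), selIdx eV (SQ k) hS = ud := by
      intro k hk hS
      apply eV.injective
      apply Fin.val_injective
      rw [hsel_val k hS, hud, hsel_val K hSK]
      exact hKconst k hk
    have hudSK := selIdx_mem eV (SQ K) hSK
    rw [hmemSQ] at hudSK
    obtain ⟨hpc1, hpc2, hpc3⟩ := hudSK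
    have hstratU : ∀ k, N ≤ k → ∀ v : V,
        anU O F c0 N (compU O F c0 N (lN, ud) ((wk k).drop N)).2 v
          = F.strat (wN, ud) (wk k) v := by
      intro k hk v
      rw [anU_compU]
      show F.strat (decL O c0 lN.1, ud) (decL O c0 lN.1 ++ (wk k).drop N) v = _
      rw [hD]
      have hsplit : wN ++ (wk k).drop N = wk k := by
        conv_rhs => rw [← List.take_append_drop N (wk k)]
        rw [hwk_take N k hk]
      rw [hsplit]
    have hkey : ∀ k, K ≤ k → φ k ∉ O.V1 →
        φ (k+1) = F.strat (wN, ud) (wk k) (φ k) := by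
      intro k hk h1
      have hkN : N ≤ k := le_trans hKN hk
      rw [hmove k hkN h1, an0_inr]
      split
      · next hS' =>
        have h6 : selIdx eV (SFil O F c0 N W lN
            (fun u => compU O F c0 N (lN, u) ((wk k).drop N)) (φ k)) hS' = ud :=
          hsel_eq k hk hS'
        rw [h6]
        exact hstratU k hkN (φ k)
      · next hS' => exact absurd (hSQne k hkN) hS'
    -- soundness: the pseudo-play reaching φ K
    obtain ⟨g, hg0, hgl, hgc, hgm⟩ := compU_sound O F c0 N (lN, ud) ((wk K).drop N) (φ K) hpc1
    have hdroplen : ((wk K).drop N).length = K - N := by rw [List.length_drop, hwklen]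
    rw [hdroplen] at hgl
    set mir : ℕ → V := fun j => if j < K then g (j - N) else φ j with hmir
    have hmirN : mir N = ud := by
      rw [hmir]
      dsimp only
      by_cases h1 : N < K
      · rw [if_pos h1]
        simpa using hg0
      · rw [if_neg h1]
        have hKe : K = N := by omega
        have h3 : (wk K).drop N = [] := by rw [hKe]; exact hdropN
        have h2 := hpc1
        rw [h3, compU_nil] at h2
        rw [← hKe]
        exact Finset.mem_singleton.mp h2
    have hΓmir : ∀ j, N ≤ j → O.Γ (mir j) = O.Γ (φ j) := by
      intro j hj
      rw [hmir]
      dsimp only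
      by_cases h1 : j < K
      · rw [if_pos h1]
        have hjl : j - N < ((wk K).drop N).length := by rw [hdroplen]; omega
        have hc := hgc (j - N) hjl
        rw [hc, List.getElem_drop]
        have hNj : N + (j - N) = j := by omega
        simp only [hwk, List.getElem_map, List.getElem_range, hNj]
      · rw [if_neg h1]
    set τ : List C → V → V := F.strat (wN, ud) with hτ
    set σm : List C → V → V := fun w u =>
      if (u, mir (w.length + 1)) ∈ O.E then mir (w.length + 1) else dflt O u with hσm
    have hσmval : O.Valid1 σm := by
      intro w u hu
      rw [hσm]
      dsimp only
      split
      · assumption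
      · exact dflt_edge O hwf (Or.inl hu)
    have hmirror : ∀ j, O.stepSeq (O.combine σm τ) wN ud j = (wk (N+j), mir (N+j)) := by
      intro j
      induction j with
      | zero =>
        show (wN, ud) = _
        rw [Nat.add_zero, hmirN, hwNdef]
      | succ j ih =>
        rw [stepSeq_succ, ih]
        have hcol : O.Γ (mir (N+j)) = O.Γ (φ (N+j)) := hΓmir (N+j) (by omega)
        have hmv : O.combine σm τ (wk (N+j)) (mir (N+j)) = mir (N+j+1) := by
          by_cases h1 : N + j < K
          · have hmg : mir (N+j) = g j := by
              rw [hmir]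
              dsimp only
              rw [if_pos h1]
              congr 1
              omega
            have hmg' : mir (N+j+1) = g (j+1) := by
              rw [hmir]
              dsimp only
              by_cases h2 : N+j+1 < K
              · rw [if_pos h2]
                congr 1
                omega
              · rw [if_neg h2]
                have hKe : K = N+j+1 := by omega
                have h3 : K - N = j + 1 := by omega
                rw [← hKe, ← h3, hgl]
            have hjl : j < ((wk K).drop N).length := by rw [hdroplen]; omega
            rcases hgm j hjl with ⟨hV1, hE⟩ | ⟨hV1, hEq⟩
            · rw [hmg, combine_eq_of_V1 O _ _ hV1, hσm]
              dsimp only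
              rw [hwklen, hmg']
              rw [if_pos hE]
            · rw [hmg, combine_eq_of_not_V1 O _ _ hV1, hmg', hEq, hτ]
              have htd : ((wk K).drop N).take j = (wk (N+j)).drop N := by
                have h4 := List.drop_take (i := N) (j := N+j) (l := wk K)
                rw [hwk_take (N+j) K (by omega)] at h4
                have h5 : N + j - N = j := by omega
                rw [h5] at h4
                exact h4.symm
              rw [htd]
              exact (hstratU (N+j) (by omega) (g j)).symm
          · have h2 : K ≤ N + j := by omega
            have hmg : mir (N+j) = φ (N+j) := by
              rw [hmir]
              dsimp only
              rw [if_neg h1]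
            have hmg' : mir (N+j+1) = φ (N+j+1) := by
              rw [hmir]
              dsimp only
              rw [if_neg (by omega)]
            by_cases hV1 : φ (N+j) ∈ O.V1
            · rw [hmg, combine_eq_of_V1 O _ _ hV1, hσm]
              dsimp only
              rw [hwklen, hmg']
              have hE : (φ (N+j), φ (N+j+1)) ∈ O.E := by
                rw [hsucc (N+j), hσc, combine_eq_of_V1 O _ _ hV1]
                exact hσ1 _ _ hV1
              rw [if_pos hE]
            · rw [hmg, combine_eq_of_not_V1 O _ _ hV1, hmg']
              rw [← hτ] at *
              exact (hkey (N+j) h2 hV1).symm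
        rw [hmv, hcol, ← hwk_succ (N+j)]
        rfl
    -- the two plays coincide
    have hwNlen : wN.length = N := hwklen N
    have hτwin := hB (wN, ud) hpc2 hpc3
    have hplaym : O.play (O.combine σm τ) wN ud ∉ W := hτwin σm hσmval
    intro hWmem
    apply hplaym
    have hpe : O.play (O.combine σm τ) wN ud = O.play σc [] v0 := by
      funext i
      by_cases hi : i < N
      · have hi' : i < wN.length := by omega
        rw [play_nil]
        show (if h : i < wN.length then wN.get ⟨i, h⟩ else _) = _
        rw [dif_pos hi']
        simp only [List.get_eq_getElem, hwNdef, hwk, List.getElem_map, List.getElem_range]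
        rfl
      · have hi' : ¬ i < wN.length := by omega
        rw [play_nil]
        show (if h : i < wN.length then wN.get ⟨i, h⟩ else
          O.Γ (O.stepSeq (O.combine σm τ) wN ud (i - wN.length)).2) = _
        rw [dif_neg hi', hwNlen, hmirror (i - N)]
        have h7 : N + (i - N) = i := by omega
        rw [h7]
        exact hΓmir i (by omega)
    rw [hpe]
    exact hWmem
  intro hmem
  rcases hmem with hmem | hmem
  · exact havoid hmem
  · obtain ⟨n, hn⟩ := hhit
    exact hmem n hn

end S12
/-- Lemma 11: disjunction with an arbitrary language-based condition,
for Player 2. -/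
theorem stmt12 {V C : Type} [Fintype V] (O : Arena V C) (hwf : O.WF)
    (W : Set (ℕ → C))
    (h : ∀ (w : List C), ∀ v ∈ O.vertices, O.Wins2From W w v →
      ∃ σ2, O.Valid2 σ2 ∧ Arena.IsFM O.V2 σ2 ∧ O.Winning2 W σ2 w v)
    (L : Set (List C)) :
    ∀ v0 ∈ O.vertices,
      O.Wins2From {ρ | ρ ∈ W ∨ ∀ n : ℕ, seqPrefix ρ n ∉ L} [] v0 →
      ∃ σ2, O.Valid2 σ2 ∧ Arena.IsFM O.V2 σ2 ∧
        O.Winning2 {ρ | ρ ∈ W ∨ ∀ n : ℕ, seqPrefix ρ n ∉ L} σ2 [] v0 := by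
  classical
  intro v0 hv0 hwin
  obtain ⟨σ2, hval2, hwin2⟩ := hwin
  obtain ⟨N, hN⟩ := S12.exists_bound O hwf W L hval2 hv0 hwin2
  have hh : ∀ p : List C × V, ∃ (M : Type) (_ : Fintype M) (m0 : M) (au : M → C → M)
      (an : M → V → V),
      (∀ w : List C, ∀ v ∈ O.V2, (v, an (w.foldl au m0) v) ∈ O.E) ∧
      (p.2 ∈ O.vertices → O.Wins2From W p.1 p.2 →
        O.Winning2 W (fun w v => an (w.foldl au m0) v) p.1 p.2) := by
    intro p
    by_cases hp : p.2 ∈ O.vertices ∧ O.Wins2From W p.1 p.2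
    · obtain ⟨σ, hσval, ⟨M, ftM, m0, au, an, heq⟩, hσwin⟩ := h p.1 p.2 hp.1 hp.2
      refine ⟨M, ftM, m0, au, fun m v => if v ∈ O.V2 then an m v else S12.dflt O v, ?_, ?_⟩
      · intro w v hv
        dsimp only
        rw [if_pos hv, ← heq w v hv]
        exact hσval w v hv
      · intro _ _ σ1 hσ1
        have hagree : ∀ w, ∀ v ∈ O.vertices,
            (O.combine σ1 (fun w v =>
              (fun m v => if v ∈ O.V2 then an m v else S12.dflt O v) (w.foldl au m0) v)) w v
              = O.combine σ1 σ w v := by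
          intro w v hv
          by_cases h1 : v ∈ O.V1
          · rw [S12.combine_eq_of_V1 O _ _ h1, S12.combine_eq_of_V1 O _ _ h1]
          · have h2 : v ∈ O.V2 := S12.mem_V2_of_not_V1 O hv h1
            rw [S12.combine_eq_of_not_V1 O _ _ h1, S12.combine_eq_of_not_V1 O _ _ h1]
            dsimp only
            rw [if_pos h2, ← heq w v h2]
        rw [S12.play_eq_of_eqOn O hwf (S12.combine_valid O hσ1 hσval) hagree p.1 hp.1]
        exact hσwin σ1 hσ1
    · refine ⟨PUnit, inferInstance, PUnit.unit, fun _ _ => PUnit.unit,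
        fun _ v => S12.dflt O v, ?_, ?_⟩
      · intro w v hv
        exact S12.dflt_edge O hwf (Or.inr hv)
      · intro h1 h2
        exact absurd ⟨h1, h2⟩ hp
  choose Mch ftM m0M auM anM hA hB using hh
  refine ⟨S12.sigma' O ⟨Mch, ftM, m0M, auM, anM⟩ (O.Γ v0) N W σ2 (Fintype.equivFin V), ?_, ?_, ?_⟩
  · exact S12.sigma'_valid O _ _ N W σ2 _ hwf hval2 (fun p w v hv => hA p w v hv)
  · exact S12.sigma'_isFM O _ _ N W σ2 _
  · exact S12.main_win O hwf W L σ2 hval2 v0 hv0 hwin2 N hN (O.Γ v0) ⟨Mch, ftM, m0M, auM, anM⟩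
      (fun p w v hv => hA p w v hv) (fun p h1 h2 => hB p h1 h2) (Fintype.equivFin V)
end

section
/- Let g = (O, W) be a game with vertex set V and let m : ℕ → ℕ. Assume that whenever O' = (O × 𝒜')|_S for some DFA 𝒜' over C and some set S satisfying the restriction condition in O × 𝒜', and v is a vertex of O', then one of the two players has a winning strategy from (ε, v) in the game (O', W), and that player has a finite-memory winning strategy from (ε, v) of size at most m(n), where n is the number of vertices of O'. Then for every DFA 𝒜 over C with state set Q and every vertex v₀ of O, one of the two players has a winning strategy from (ε, v₀) in g_𝒜 = (O, W_𝒜), where W_𝒜 = {ρ ∈ C^ω : ρ ∈ W and Pref(ρ) ∩ L(𝒜) = ∅}, and that player has a finite-memory winning strategy from (ε, v₀) of size at most |Q| · m(|V| · |Q|). -/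
namespace Stmt13Aux

open Arena

variable {V C Q : Type}

lemma seqPrefix_succ (ρ : ℕ → C) (n : ℕ) :
    seqPrefix ρ (n + 1) = seqPrefix ρ n ++ [ρ n] := by
  simp [seqPrefix, List.range_succ]

open Classical in
/-- Sticky version of a DFA: accepting states become absorbing. -/
noncomputable def sticky (A : DFA C Q) : DFA C Q :=
  ⟨fun q c => if q ∈ A.accept then q else A.step q c, A.start, A.accept⟩

lemma sticky_step_not (A : DFA C Q) {q : Q} (h : q ∉ A.accept) (c : C) :
    (sticky A).step q c = A.step q c := if_neg h

lemma sticky_step_mem (A : DFA C Q) {q : Q} (h : q ∈ A.accept) (c : C) :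
    (sticky A).step q c = q := if_pos h

lemma sticky_eval_eq (A : DFA C Q) (ρ : ℕ → C) :
    ∀ n, (∀ k < n, (sticky A).eval (seqPrefix ρ k) ∉ A.accept) →
      (sticky A).eval (seqPrefix ρ n) = A.eval (seqPrefix ρ n) := by
  intro n
  induction n with
  | zero => intro _; rfl
  | succ n ih =>
    intro h
    have hn : (sticky A).eval (seqPrefix ρ n) ∉ A.accept := h n (Nat.lt_succ_self n)
    have heq := ih (fun k hk => h k (Nat.lt_succ_of_lt hk))
    rw [seqPrefix_succ, DFA.eval_append_singleton, DFA.eval_append_singleton, heq,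
      sticky_step_not A (heq ▸ hn)]

lemma sticky_safe (A : DFA C Q) (ρ : ℕ → C)
    (h : ∀ n, (sticky A).eval (seqPrefix ρ n) ∉ A.accept) :
    ∀ n, seqPrefix ρ n ∉ A.accepts := by
  intro n hn
  rw [DFA.mem_accepts] at hn
  exact h n (by rwa [sticky_eval_eq A ρ n (fun k _ => h k)])

lemma sticky_hit (A : DFA C Q) (ρ : ℕ → C)
    (h : ∃ n, (sticky A).eval (seqPrefix ρ n) ∈ A.accept) :
    ∃ n, seqPrefix ρ n ∈ A.accepts := by
  classical
  refine ⟨Nat.find h, ?_⟩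
  rw [DFA.mem_accepts]
  rw [← sticky_eval_eq A ρ _ (fun k hk => Nat.find_min h hk)]
  exact Nat.find_spec h

section Run

variable (O : Arena V C)

lemma stepSeq_succ (σ : List C → V → V) (w : List C) (v : V) (n : ℕ) :
    O.stepSeq σ w v (n + 1) =
      ((O.stepSeq σ w v n).1 ++ [O.Γ (O.stepSeq σ w v n).2],
        σ (O.stepSeq σ w v n).1 (O.stepSeq σ w v n).2) := rfl

lemma play_nil (σ : List C → V → V) (v : V) (i : ℕ) :
    O.play σ [] v i = O.Γ (O.stepSeq σ [] v i).2 := by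
  simp [Arena.play]

lemma stepSeq_fst (σ : List C → V → V) (v : V) :
    ∀ n, (O.stepSeq σ [] v n).1 = seqPrefix (O.play σ [] v) n := by
  intro n
  induction n with
  | zero => rfl
  | succ n ih => rw [stepSeq_succ, seqPrefix_succ, play_nil, ← ih]

lemma combine_mem (σ1 σ2 : List C → V → V) (w : List C) {v : V} (h : v ∈ O.V1) :
    O.combine σ1 σ2 w v = σ1 w v := if_pos h

lemma combine_not (σ1 σ2 : List C → V → V) (w : List C) {v : V} (h : v ∉ O.V1) :
    O.combine σ1 σ2 w v = σ2 w v := if_neg h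

lemma combine_edge (hwf : O.WF) {σ1 σ2 : List C → V → V}
    (h1 : O.Valid1 σ1) (h2 : O.Valid2 σ2) :
    ∀ (w : List C), ∀ v ∈ O.vertices, (v, O.combine σ1 σ2 w v) ∈ O.E := by
  intro w v hv
  by_cases h : v ∈ O.V1
  · rw [combine_mem O σ1 σ2 w h]; exact h1 w v h
  · rw [combine_not O σ1 σ2 w h]; exact h2 w v (hv.resolve_left h)

lemma stepSeq_mem_vertices (hwf : O.WF) {σ : List C → V → V}
    (hσ : ∀ (w : List C), ∀ v ∈ O.vertices, (v, σ w v) ∈ O.E)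
    {v0 : V} (h0 : v0 ∈ O.vertices) :
    ∀ n, (O.stepSeq σ [] v0 n).2 ∈ O.vertices := by
  intro n
  induction n with
  | zero => exact h0
  | succ n ih => rw [stepSeq_succ]; exact (hwf.2.1 _ (hσ _ _ ih)).2

end Run

section Sim

variable {K : Type} (O : Arena V C) (P : Arena (V × K) C)

lemma sim (hΓ : ∀ p, P.Γ p = O.Γ p.1)
    (σ : List C → V → V) (τ : List C → V × K → V × K)
    (upd : K → C → K) (k0 : K) (Inv : Set (V × K)) (v0 : V)
    (h0 : (v0, k0) ∈ Inv)
    (H : ∀ n,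
      ((O.stepSeq σ [] v0 n).2, List.foldl upd k0 (O.stepSeq σ [] v0 n).1) ∈ Inv →
      τ (O.stepSeq σ [] v0 n).1 ((O.stepSeq σ [] v0 n).2, List.foldl upd k0 (O.stepSeq σ [] v0 n).1)
        = (σ (O.stepSeq σ [] v0 n).1 (O.stepSeq σ [] v0 n).2,
           upd (List.foldl upd k0 (O.stepSeq σ [] v0 n).1) (O.Γ (O.stepSeq σ [] v0 n).2)) ∧
      (σ (O.stepSeq σ [] v0 n).1 (O.stepSeq σ [] v0 n).2,
           upd (List.foldl upd k0 (O.stepSeq σ [] v0 n).1) (O.Γ (O.stepSeq σ [] v0 n).2)) ∈ Inv) :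
    ∀ n, (P.stepSeq τ [] (v0, k0) n).1 = (O.stepSeq σ [] v0 n).1 ∧
      (P.stepSeq τ [] (v0, k0) n).2 = ((O.stepSeq σ [] v0 n).2, List.foldl upd k0 (O.stepSeq σ [] v0 n).1) ∧
      ((O.stepSeq σ [] v0 n).2, List.foldl upd k0 (O.stepSeq σ [] v0 n).1) ∈ Inv := by
  intro n
  induction n with
  | zero => exact ⟨rfl, rfl, h0⟩
  | succ n ih =>
    obtain ⟨e1, e2, hInv⟩ := ih
    obtain ⟨hτ, hInv'⟩ := H n hInv
    have hfold : List.foldl upd k0 ((O.stepSeq σ [] v0 n).1 ++ [O.Γ (O.stepSeq σ [] v0 n).2])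
        = upd (List.foldl upd k0 (O.stepSeq σ [] v0 n).1) (O.Γ (O.stepSeq σ [] v0 n).2) := by
      rw [List.foldl_append]; rfl
    refine ⟨?_, ?_, ?_⟩
    · rw [stepSeq_succ, stepSeq_succ, e1, e2, hΓ]
    · rw [stepSeq_succ, stepSeq_succ, e1, e2, hτ, hfold]
    · rw [stepSeq_succ]
      simpa [hfold] using hInv'

lemma sim_play (hΓ : ∀ p, P.Γ p = O.Γ p.1)
    (σ : List C → V → V) (τ : List C → V × K → V × K)
    (upd : K → C → K) (k0 : K) (Inv : Set (V × K)) (v0 : V)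
    (h0 : (v0, k0) ∈ Inv)
    (H : ∀ n,
      ((O.stepSeq σ [] v0 n).2, List.foldl upd k0 (O.stepSeq σ [] v0 n).1) ∈ Inv →
      τ (O.stepSeq σ [] v0 n).1 ((O.stepSeq σ [] v0 n).2, List.foldl upd k0 (O.stepSeq σ [] v0 n).1)
        = (σ (O.stepSeq σ [] v0 n).1 (O.stepSeq σ [] v0 n).2,
           upd (List.foldl upd k0 (O.stepSeq σ [] v0 n).1) (O.Γ (O.stepSeq σ [] v0 n).2)) ∧
      (σ (O.stepSeq σ [] v0 n).1 (O.stepSeq σ [] v0 n).2,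
           upd (List.foldl upd k0 (O.stepSeq σ [] v0 n).1) (O.Γ (O.stepSeq σ [] v0 n).2)) ∈ Inv) :
    P.play τ [] (v0, k0) = O.play σ [] v0 := by
  funext i
  rw [play_nil, play_nil, (sim O P hΓ σ τ upd k0 Inv v0 h0 H i).2.1, hΓ]

end Sim

end Stmt13Aux
namespace Stmt13Aux

open Arena

variable {V C Q : Type}

lemma bdd_of_finite {α : Type} [Finite α] (s : Set α) (f : ℕ → Set α) (hmono : Monotone f)
    (h : ∀ x ∈ s, ∃ n, x ∈ f n) : ∃ n, ∀ x ∈ s, x ∈ f n := by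
  classical
  have hfin : s.Finite := Set.toFinite s
  refine Set.Finite.induction_on (motive := fun s _ => (∀ x ∈ s, ∃ n, x ∈ f n) → ∃ n, ∀ x ∈ s, x ∈ f n) s hfin (fun _ => ⟨0, by simp⟩) ?_ h
  intro a s' _ _ ih h'
  obtain ⟨n, hn⟩ := ih (fun x hx => h' x (Set.mem_insert_of_mem _ hx))
  obtain ⟨m, hm⟩ := h' a (Set.mem_insert _ _)
  exact ⟨max n m, fun x hx => by
    rcases hx with rfl | hx
    · exact hmono (le_max_right n m) hm
    · exact hmono (le_max_left n m) (hn x hx)⟩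

lemma mem_prodDFA_vertices {K : Type} (O : Arena V C) (A : DFA C K) (p : V × K) :
    p ∈ (O.prodDFA A).vertices ↔ p.1 ∈ O.vertices := by
  simp [Arena.prodDFA, Arena.vertices, Set.mem_union]

lemma prodDFA_E {K : Type} (O : Arena V C) (A : DFA C K) {v v' : V} {q q' : K} :
    ((v, q), (v', q')) ∈ (O.prodDFA A).E ↔ (v, v') ∈ O.E ∧ q' = A.step q (O.Γ v) :=
  Iff.rfl

lemma prodDFA_E_snd {K : Type} (O : Arena V C) (A : DFA C K) {p p' : V × K}
    (h : (p, p') ∈ (O.prodDFA A).E) : p'.2 = A.step p.2 (O.Γ p.1) := h.2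

section Attr

variable (O : Arena V C) (B : DFA C Q) (F : Set Q)

def attr : ℕ → Set (V × Q)
  | 0 => {p | p.1 ∈ O.vertices ∧ p.2 ∈ F}
  | n + 1 => attr n ∪ {p | p.1 ∈ O.vertices ∧
      ((p.1 ∈ O.V1 ∧ ∀ p', (p, p') ∈ (O.prodDFA B).E → p' ∈ attr n) ∨
       (p.1 ∈ O.V2 ∧ ∃ p', (p, p') ∈ (O.prodDFA B).E ∧ p' ∈ attr n))}

def Uset : Set (V × Q) := ⋃ n, attr O B F n

def SafeSet : Set (V × Q) := {p | p.1 ∈ O.vertices} \ Uset O B F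

lemma attr_mono : Monotone (attr O B F) :=
  monotone_nat_of_le_succ (fun _ => Set.subset_union_left)

lemma attr_subset_vertices : ∀ n, ∀ p ∈ attr O B F n, p.1 ∈ O.vertices := by
  intro n
  induction n with
  | zero => exact fun p hp => hp.1
  | succ n ih => rintro p (hp | hp); exacts [ih p hp, hp.1]

lemma Uset_subset_vertices : ∀ p ∈ Uset O B F, p.1 ∈ O.vertices := by
  intro p hp
  obtain ⟨n, hn⟩ := Set.mem_iUnion.mp hp
  exact attr_subset_vertices O B F n p hn

noncomputable def rank (p : V × Q) : ℕ := sInf {n | p ∈ attr O B F n}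

lemma rank_mem {p : V × Q} (h : p ∈ Uset O B F) : p ∈ attr O B F (rank O B F p) := by
  obtain ⟨n, hn⟩ := Set.mem_iUnion.mp h
  exact Nat.sInf_mem (s := {n | p ∈ attr O B F n}) ⟨n, hn⟩

lemma rank_le {p : V × Q} {n : ℕ} (h : p ∈ attr O B F n) : rank O B F p ≤ n :=
  Nat.sInf_le h

lemma mem_Uset_of_attr {p : V × Q} {n : ℕ} (h : p ∈ attr O B F n) : p ∈ Uset O B F :=
  Set.mem_iUnion.mpr ⟨n, h⟩

lemma safe_not_F {p : V × Q} (hp : p ∈ SafeSet O B F) : p.2 ∉ F :=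
  fun h => hp.2 (mem_Uset_of_attr O B F (n := 0) ⟨hp.1, h⟩)

lemma safe_v2 (hwf : O.WF) {p : V × Q} (hp : p ∈ SafeSet O B F) (h2 : p.1 ∈ O.V2) :
    ∀ p', (p, p') ∈ (O.prodDFA B).E → p' ∈ SafeSet O B F := by
  intro p' he
  have hv' : p'.1 ∈ O.vertices := by
    rcases p with ⟨v, q⟩; rcases p' with ⟨v', q'⟩
    exact (hwf.2.1 _ he.1).2
  refine ⟨hv', fun hU => ?_⟩
  obtain ⟨n, hn⟩ := Set.mem_iUnion.mp hU
  exact hp.2 (mem_Uset_of_attr O B F (n := n + 1)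
    (Or.inr ⟨hp.1, Or.inr ⟨h2, p', he, hn⟩⟩))

lemma safe_v1 [Finite V] [Finite Q] (hwf : O.WF) {p : V × Q} (hp : p ∈ SafeSet O B F) (h1 : p.1 ∈ O.V1) :
    ∃ p', (p, p') ∈ (O.prodDFA B).E ∧ p' ∈ SafeSet O B F := by
  by_contra hc
  push_neg at hc
  have hall : ∀ p' ∈ {p' | (p, p') ∈ (O.prodDFA B).E}, ∃ n, p' ∈ attr O B F n := by
    intro p' he
    have hv' : p'.1 ∈ O.vertices := by
      rcases p with ⟨v, q⟩; rcases p' with ⟨v', q'⟩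
      exact (hwf.2.1 _ he.1).2
    have := hc p' he
    by_contra hn
    push_neg at hn
    exact this ⟨hv', fun hU => by
      obtain ⟨n, hnn⟩ := Set.mem_iUnion.mp hU; exact hn n hnn⟩
  obtain ⟨N, hN⟩ := bdd_of_finite _ (attr O B F) (attr_mono O B F) hall
  exact hp.2 (mem_Uset_of_attr O B F (n := N + 1)
    (Or.inr ⟨hp.1, Or.inl ⟨h1, fun p' he => hN p' he⟩⟩))

end Attr

end Stmt13Aux
namespace Stmt13Aux

open Arena

variable {V C Q : Type}

section Attr2

variable (O : Arena V C) (B : DFA C Q) (F : Set Q)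

lemma safe_succ [Finite V] [Finite Q] (hwf : O.WF) {p : V × Q} (hp : p ∈ SafeSet O B F) :
    ∃ p', (p, p') ∈ (O.prodDFA B).E ∧ p' ∈ SafeSet O B F := by
  by_cases h1 : p.1 ∈ O.V1
  · exact safe_v1 O B F hwf hp h1
  · have h2 : p.1 ∈ O.V2 := hp.1.resolve_left h1
    obtain ⟨u, hu⟩ := hwf.2.2 p.1 hp.1
    have he : (p, (u, B.step p.2 (O.Γ p.1))) ∈ (O.prodDFA B).E := ⟨hu, rfl⟩
    exact ⟨_, he, safe_v2 O B F hwf hp h2 _ he⟩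

lemma rank_pos_cases {p : V × Q} (hU : p ∈ Uset O B F) (hF : p.2 ∉ F) :
    ∃ t, rank O B F p = t + 1 ∧ p ∉ attr O B F t ∧ p.1 ∈ O.vertices ∧
      ((p.1 ∈ O.V1 ∧ ∀ p', (p, p') ∈ (O.prodDFA B).E → p' ∈ attr O B F t) ∨
       (p.1 ∈ O.V2 ∧ ∃ p', (p, p') ∈ (O.prodDFA B).E ∧ p' ∈ attr O B F t)) := by
  have hmem := rank_mem O B F hU
  have hne : rank O B F p ≠ 0 := by
    intro h0
    rw [h0] at hmem
    exact hF hmem.2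
  obtain ⟨t, ht⟩ := Nat.exists_eq_succ_of_ne_zero hne
  rw [ht] at hmem
  have hnt : p ∉ attr O B F t := fun h => by
    have := rank_le O B F h; omega
  rcases hmem with h | h
  · exact absurd h hnt
  · exact ⟨t, ht, hnt, h.1, h.2⟩

lemma U_succ (hwf : O.WF) (hB : ∀ q ∈ F, ∀ c, B.step q c = q) {p : V × Q}
    (hp : p ∈ Uset O B F) :
    ∃ p', (p, p') ∈ (O.prodDFA B).E ∧ p' ∈ Uset O B F := by
  have hv : p.1 ∈ O.vertices := Uset_subset_vertices O B F p hp
  by_cases hF : p.2 ∈ F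
  · obtain ⟨u, hu⟩ := hwf.2.2 p.1 hv
    refine ⟨(u, B.step p.2 (O.Γ p.1)), ⟨hu, rfl⟩, ?_⟩
    rw [hB p.2 hF]
    exact mem_Uset_of_attr O B F (n := 0) ⟨(hwf.2.1 _ hu).2, hF⟩
  · obtain ⟨t, _, _, _, hd⟩ := rank_pos_cases O B F hp hF
    rcases hd with ⟨h1, hall⟩ | ⟨h2, p', he, hp'⟩
    · obtain ⟨u, hu⟩ := hwf.2.2 p.1 hv
      have he : (p, (u, B.step p.2 (O.Γ p.1))) ∈ (O.prodDFA B).E := ⟨hu, rfl⟩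
      exact ⟨_, he, mem_Uset_of_attr O B F (hall _ he)⟩
    · exact ⟨p', he, mem_Uset_of_attr O B F hp'⟩

lemma att_exists (hwf : O.WF) {p : V × Q} (hp : p ∈ Uset O B F) (h1 : p.1 ∉ O.V1)
    (hF : p.2 ∉ F) :
    ∃ p', (p, p') ∈ (O.prodDFA B).E ∧ p' ∈ Uset O B F ∧ rank O B F p' < rank O B F p := by
  obtain ⟨t, ht, _, _, hd⟩ := rank_pos_cases O B F hp hF
  rcases hd with ⟨hv1, _⟩ | ⟨_, p', he, hp'⟩
  · exact absurd hv1 h1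
  · exact ⟨p', he, mem_Uset_of_attr O B F hp',
      lt_of_le_of_lt (rank_le O B F hp') (by omega)⟩

open Classical in
noncomputable def att (hwf : O.WF) : V × Q → V × Q := fun p =>
  if h : p ∈ Uset O B F ∧ p.1 ∉ O.V1 ∧ p.2 ∉ F then
    Classical.choose (att_exists O B F hwf h.1 h.2.1 h.2.2)
  else p

lemma att_spec (hwf : O.WF) {p : V × Q} (h : p ∈ Uset O B F ∧ p.1 ∉ O.V1 ∧ p.2 ∉ F) :
    (p, att O B F hwf p) ∈ (O.prodDFA B).E ∧ att O B F hwf p ∈ Uset O B F ∧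
      rank O B F (att O B F hwf p) < rank O B F p := by
  rw [att, dif_pos h]
  exact Classical.choose_spec (att_exists O B F hwf h.1 h.2.1 h.2.2)

end Attr2

section Dfl

open Classical in
noncomputable def dfl (O : Arena V C) : V → V := fun v =>
  if h : ∃ u, (v, u) ∈ O.E then Classical.choose h else v

lemma dfl_edge (O : Arena V C) {v : V} (h : ∃ u, (v, u) ∈ O.E) : (v, dfl O v) ∈ O.E := by
  rw [dfl, dif_pos h]
  exact Classical.choose_spec h

end Dfl

section Force

variable (O : Arena V C) (B : DFA C Q) (F : Set Q)

lemma eval_append_singleton' (B : DFA C Q) (w : List C) (c : C) :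
    B.eval (w ++ [c]) = B.step (B.eval w) c := DFA.eval_append_singleton B w c

lemma force [Finite V] [Finite Q] (hwf : O.WF)
    (σ : List C → V → V) (v0 : V)
    (hedge : ∀ n, ((O.stepSeq σ [] v0 n).2,
        σ (O.stepSeq σ [] v0 n).1 (O.stepSeq σ [] v0 n).2) ∈ O.E)
    (hatt : ∀ n, ((O.stepSeq σ [] v0 n).2, B.eval (O.stepSeq σ [] v0 n).1) ∈ Uset O B F →
      (O.stepSeq σ [] v0 n).2 ∉ O.V1 → B.eval (O.stepSeq σ [] v0 n).1 ∉ F →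
      σ (O.stepSeq σ [] v0 n).1 (O.stepSeq σ [] v0 n).2
        = (att O B F hwf ((O.stepSeq σ [] v0 n).2, B.eval (O.stepSeq σ [] v0 n).1)).1) :
    ∀ N k, ((O.stepSeq σ [] v0 k).2, B.eval (O.stepSeq σ [] v0 k).1) ∈ Uset O B F →
      rank O B F ((O.stepSeq σ [] v0 k).2, B.eval (O.stepSeq σ [] v0 k).1) ≤ N →
      ∃ j, B.eval (O.stepSeq σ [] v0 j).1 ∈ F := by
  intro N
  induction N with
  | zero =>
    intro k hU hrk
    have := rank_mem O B F hU
    rw [Nat.le_zero.mp hrk] at this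
    exact ⟨k, this.2⟩
  | succ N ih =>
    intro k hU hrk
    set p := ((O.stepSeq σ [] v0 k).2, B.eval (O.stepSeq σ [] v0 k).1) with hpdef
    by_cases hF : p.2 ∈ F
    · exact ⟨k, hF⟩
    -- the next position
    have hnext1 : (O.stepSeq σ [] v0 (k+1)).2 = σ (O.stepSeq σ [] v0 k).1 (O.stepSeq σ [] v0 k).2 := by
      rw [stepSeq_succ]
    have hnext2 : B.eval (O.stepSeq σ [] v0 (k+1)).1 = B.step p.2 (O.Γ p.1) := by
      rw [stepSeq_succ]
      exact eval_append_singleton' B _ _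
    have hedgeP : (p, ((O.stepSeq σ [] v0 (k+1)).2, B.eval (O.stepSeq σ [] v0 (k+1)).1))
        ∈ (O.prodDFA B).E := by
      refine ⟨?_, hnext2⟩
      rw [hnext1]
      exact hedge k
    obtain ⟨t, ht, hnt, hv, hd⟩ := rank_pos_cases O B F hU hF
    rcases hd with ⟨h1, hall⟩ | ⟨h2, _⟩
    · -- Player 1 vertex: every successor is in attr t
      have hin := hall _ hedgeP
      refine ih (k+1) (mem_Uset_of_attr O B F hin) ?_
      have := rank_le O B F hin
      omega
    · -- Player 2 vertex: the strategy plays the attractor move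
      have h1 : p.1 ∉ O.V1 := fun h => (Set.disjoint_left.mp hwf.1 h) h2
      have hmove := hatt k hU h1 hF
      have hspec := att_spec O B F hwf ⟨hU, h1, hF⟩
      have hpair : ((O.stepSeq σ [] v0 (k+1)).2, B.eval (O.stepSeq σ [] v0 (k+1)).1)
          = att O B F hwf p := by
        have hsnd : (att O B F hwf p).2 = B.step p.2 (O.Γ p.1) := hspec.1.2
        refine Prod.ext ?_ ?_
        · rw [hnext1, hmove]
        · rw [hnext2, hsnd]
      have hle : rank O B F (att O B F hwf p) ≤ N := by
        have := hspec.2.2; omega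
      refine ih (k+1) ?_ ?_
      · rw [hpair]; exact hspec.2.1
      · rw [hpair]; exact hle

end Force

end Stmt13Aux
namespace Stmt13Aux

open Arena

variable {V C Q : Type}

/-- A DFA on two disjoint copies of the state space of `B`. -/
def sumDFA (B : DFA C Q) : DFA C (Q ⊕ Q) :=
  ⟨fun s c => match s with
    | Sum.inl q => Sum.inl (B.step q c)
    | Sum.inr q => Sum.inr (B.step q c),
   Sum.inl B.start, ∅⟩

lemma sumDFA_foldl_inl (B : DFA C Q) (w : List C) :
    ∀ r : Q, List.foldl (sumDFA B).step (Sum.inl r) w = Sum.inl (List.foldl B.step r w) := by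
  induction w with
  | nil => intro r; rfl
  | cons c w ih => intro r; exact ih (B.step r c)

lemma eval_foldl (B : DFA C Q) (w : List C) : B.eval w = List.foldl B.step B.start w := rfl

lemma foldl_pair {M N : Type} (f : M → C → M) (g : N → C → N) (w : List C) :
    ∀ (a : M) (b : N),
      List.foldl (fun (p : M × N) c => (f p.1 c, g p.2 c)) (a, b) w
        = (List.foldl f a w, List.foldl g b w) := by
  induction w with
  | nil => intro a b; rfl
  | cons c w ih => intro a b; exact ih (f a c) (g b c)

lemma isFMSize_pair [Fintype Q] {M : Type} (iM : Fintype M) {k : ℕ}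
    (hM : @Fintype.card M iM ≤ k)
    (B : DFA C Q) (m0 : M) (αu : M → C → M) (G : Q → M → V → V) (Vi : Set V) :
    Arena.IsFMSize Vi (fun w v => G (B.eval w) (List.foldl αu m0 w) v)
      (Fintype.card Q * k) := by
  letI := iM
  refine ⟨Q × M, inferInstance, ?_, (B.start, m0),
    fun p c => (B.step p.1 c, αu p.2 c), fun p v => G p.1 p.2 v, ?_⟩
  · rw [Fintype.card_prod]
    exact Nat.mul_le_mul_left _ hM
  · intro w v _
    rw [foldl_pair, ← eval_foldl]

open Classical in
noncomputable def strat1 (O : Arena V C) (B : DFA C Q) (F : Set Q) {M : Type}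
    (αn : M → V × (Q ⊕ Q) → V × (Q ⊕ Q)) : Q → M → V → V :=
  fun q s v => if (v, q) ∈ SafeSet O B F ∧ v ∈ O.V1 then (αn s (v, Sum.inl q)).1 else dfl O v

open Classical in
noncomputable def strat2 (O : Arena V C) (B : DFA C Q) (F : Set Q) (hwf : O.WF) {M : Type}
    (αn : M → V × (Q ⊕ Q) → V × (Q ⊕ Q)) : Q → M → V → V :=
  fun q s v =>
    if (v, q) ∈ SafeSet O B F ∧ v ∉ O.V1 then (αn s (v, Sum.inl q)).1
    else if (v, q) ∈ Uset O B F ∧ v ∉ O.V1 ∧ q ∉ F then (att O B F hwf (v, q)).1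
    else dfl O v

open Classical in
noncomputable def strat3 (O : Arena V C) (B : DFA C Q) (F : Set Q) (hwf : O.WF) :
    Q → V → V :=
  fun q v =>
    if (v, q) ∈ Uset O B F ∧ v ∉ O.V1 ∧ q ∉ F then (att O B F hwf (v, q)).1
    else dfl O v

lemma ncard_prod_univ [Fintype V] [Fintype Q] (s : Set V) :
    (s ×ˢ (Set.univ : Set Q)).ncard = s.ncard * Fintype.card Q := by
  classical
  rw [Set.ncard_eq_toFinset_card', Set.ncard_eq_toFinset_card', Set.toFinset_prod,
    Finset.card_product, Set.toFinset_univ, Finset.card_univ]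

end Stmt13Aux

namespace Stmt13Aux
variable {V C Q : Type}
lemma strat2_att (O : Arena V C) (B : DFA C Q) (F : Set Q) (hwf : O.WF) {M : Type}
    (αn : M → V × (Q ⊕ Q) → V × (Q ⊕ Q)) {q : Q} {s : M} {v : V}
    (h1 : ¬((v, q) ∈ SafeSet O B F ∧ v ∉ O.V1))
    (h2 : (v, q) ∈ Uset O B F ∧ v ∉ O.V1 ∧ q ∉ F) :
    strat2 O B F hwf αn q s v = (att O B F hwf (v, q)).1 := by
  simp only [strat2]
  rw [if_neg h1, if_pos h2]

lemma strat3_att (O : Arena V C) (B : DFA C Q) (F : Set Q) (hwf : O.WF) {q : Q} {v : V}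
    (h2 : (v, q) ∈ Uset O B F ∧ v ∉ O.V1 ∧ q ∉ F) :
    strat3 O B F hwf q v = (att O B F hwf (v, q)).1 := by
  simp only [strat3]
  rw [if_pos h2]
end Stmt13Aux
namespace Stmt13Aux

open Arena

variable {V C Q : Type}

section Sset

variable (O : Arena V C) (B : DFA C Q) (F : Set Q)

def Sset : Set (V × (Q ⊕ Q)) :=
  (fun p : V × Q => (p.1, Sum.inl p.2)) '' SafeSet O B F ∪
    (fun p : V × Q => (p.1, Sum.inr p.2)) '' Uset O B F

lemma mem_Sset_inl {v : V} {q : Q} :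
    (v, (Sum.inl q : Q ⊕ Q)) ∈ Sset O B F ↔ (v, q) ∈ SafeSet O B F := by
  constructor
  · rintro (⟨p, hp, heq⟩ | ⟨p, hp, heq⟩)
    · simp only [Prod.mk.injEq] at heq
      have : p = (v, q) := Prod.ext heq.1 (Sum.inl.inj heq.2)
      exact this ▸ hp
    · simp only [Prod.mk.injEq] at heq
      exact absurd heq.2 Sum.inr_ne_inl
  · intro h
    exact Or.inl ⟨(v, q), h, rfl⟩

lemma mem_Sset_inr {v : V} {q : Q} :
    (v, (Sum.inr q : Q ⊕ Q)) ∈ Sset O B F ↔ (v, q) ∈ Uset O B F := by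
  constructor
  · rintro (⟨p, hp, heq⟩ | ⟨p, hp, heq⟩)
    · simp only [Prod.mk.injEq] at heq
      exact absurd heq.2 Sum.inl_ne_inr
    · simp only [Prod.mk.injEq] at heq
      have : p = (v, q) := Prod.ext heq.1 (Sum.inr.inj heq.2)
      exact this ▸ hp
  · intro h
    exact Or.inr ⟨(v, q), h, rfl⟩

lemma Sset_sub : Sset O B F ⊆ (O.prodDFA (sumDFA B)).vertices := by
  rintro pp (⟨p, hp, rfl⟩ | ⟨p, hp, rfl⟩)
  · rw [mem_prodDFA_vertices]; exact hp.1
  · rw [mem_prodDFA_vertices]; exact Uset_subset_vertices O B F p hp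

lemma sumDFA_E_inl' {v : V} {q : Q} {p' : V × Q} (h : ((v, q), p') ∈ (O.prodDFA B).E) :
    (((v, Sum.inl q) : V × (Q ⊕ Q)), (p'.1, Sum.inl p'.2)) ∈ (O.prodDFA (sumDFA B)).E := by
  obtain ⟨he, hq⟩ := h
  exact ⟨he, by rw [hq]; rfl⟩

lemma sumDFA_E_inr' {v : V} {q : Q} {p' : V × Q} (h : ((v, q), p') ∈ (O.prodDFA B).E) :
    (((v, Sum.inr q) : V × (Q ⊕ Q)), (p'.1, Sum.inr p'.2)) ∈ (O.prodDFA (sumDFA B)).E := by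
  obtain ⟨he, hq⟩ := h
  exact ⟨he, by rw [hq]; rfl⟩

lemma sumDFA_E_inl_elim {v : V} {q : Q} {pp' : V × (Q ⊕ Q)}
    (h : (((v, Sum.inl q) : V × (Q ⊕ Q)), pp') ∈ (O.prodDFA (sumDFA B)).E) :
    pp' = (pp'.1, Sum.inl (B.step q (O.Γ v))) ∧
      ((v, q), (pp'.1, B.step q (O.Γ v))) ∈ (O.prodDFA B).E := by
  obtain ⟨he, hq⟩ := h
  exact ⟨Prod.ext rfl hq, ⟨he, rfl⟩⟩

lemma Sset_rest [Finite V] [Finite Q] (hwf : O.WF) (hB : ∀ q ∈ F, ∀ c, B.step q c = q) :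
    ∀ pp ∈ Sset O B F, ∃ pp' ∈ Sset O B F, (pp, pp') ∈ (O.prodDFA (sumDFA B)).E := by
  rintro pp (⟨p, hp, rfl⟩ | ⟨p, hp, rfl⟩)
  · obtain ⟨p', he, hp'⟩ := safe_succ O B F hwf hp
    refine ⟨(p'.1, Sum.inl p'.2), Or.inl ⟨p', hp', rfl⟩, ?_⟩
    rcases p with ⟨v, q⟩
    exact sumDFA_E_inl' O B he
  · obtain ⟨p', he, hp'⟩ := U_succ O B F hwf hB hp
    refine ⟨(p'.1, Sum.inr p'.2), Or.inr ⟨p', hp', rfl⟩, ?_⟩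
    rcases p with ⟨v, q⟩
    exact sumDFA_E_inr' O B he

lemma Rvertices : ((O.prodDFA (sumDFA B)).restrict (Sset O B F)).vertices = Sset O B F := by
  have h1 : ((O.prodDFA (sumDFA B)).restrict (Sset O B F)).vertices
      = (O.prodDFA (sumDFA B)).vertices ∩ Sset O B F := by
    show (_ ∩ _) ∪ (_ ∩ _) = _
    rw [← Set.union_inter_distrib_right]
    rfl
  rw [h1, Set.inter_eq_self_of_subset_right (Sset_sub O B F)]

lemma Rncard [Fintype V] [Fintype Q] :
    ((O.prodDFA (sumDFA B)).restrict (Sset O B F)).vertices.ncard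
      = O.vertices.ncard * Fintype.card Q := by
  rw [Rvertices]
  have hinj1 : Function.Injective (fun p : V × Q => (p.1, (Sum.inl p.2 : Q ⊕ Q))) := by
    rintro ⟨a, b⟩ ⟨c, d⟩ h
    simp only [Prod.mk.injEq] at h
    exact Prod.ext h.1 (Sum.inl.inj h.2)
  have hinj2 : Function.Injective (fun p : V × Q => (p.1, (Sum.inr p.2 : Q ⊕ Q))) := by
    rintro ⟨a, b⟩ ⟨c, d⟩ h
    simp only [Prod.mk.injEq] at h
    exact Prod.ext h.1 (Sum.inr.inj h.2)
  have hdisj : Disjoint ((fun p : V × Q => (p.1, (Sum.inl p.2 : Q ⊕ Q))) '' SafeSet O B F)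
      ((fun p : V × Q => (p.1, (Sum.inr p.2 : Q ⊕ Q))) '' Uset O B F) := by
    rw [Set.disjoint_left]
    rintro pp ⟨p, _, rfl⟩ ⟨p', _, heq⟩
    simp only [Prod.mk.injEq] at heq
    exact Sum.inr_ne_inl heq.2
  rw [Sset, Set.ncard_union_eq hdisj (Set.toFinite _) (Set.toFinite _),
    Set.ncard_image_of_injective _ hinj1, Set.ncard_image_of_injective _ hinj2]
  have hUsub : Uset O B F ⊆ {p : V × Q | p.1 ∈ O.vertices} :=
    fun p hp => Uset_subset_vertices O B F p hp
  have hdiff := Set.ncard_diff_add_ncard_of_subset hUsub (Set.toFinite _)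
  have hP : {p : V × Q | p.1 ∈ O.vertices} = O.vertices ×ˢ (Set.univ : Set Q) := by
    ext p; simp [Set.mem_prod]
  rw [show SafeSet O B F = {p : V × Q | p.1 ∈ O.vertices} \ Uset O B F from rfl, hdiff, hP,
    ncard_prod_univ]

lemma mem_RV1 {v : V} {k : Q ⊕ Q} :
    (v, k) ∈ ((O.prodDFA (sumDFA B)).restrict (Sset O B F)).V1 ↔
      v ∈ O.V1 ∧ (v, k) ∈ Sset O B F := by
  show (v, k) ∈ (O.V1 ×ˢ Set.univ) ∩ Sset O B F ↔ _
  simp [Set.mem_prod]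

lemma mem_RV2 {v : V} {k : Q ⊕ Q} :
    (v, k) ∈ ((O.prodDFA (sumDFA B)).restrict (Sset O B F)).V2 ↔
      v ∈ O.V2 ∧ (v, k) ∈ Sset O B F := by
  show (v, k) ∈ (O.V2 ×ˢ Set.univ) ∩ Sset O B F ↔ _
  simp [Set.mem_prod]

lemma RE_elim {pp pp' : V × (Q ⊕ Q)}
    (h : (pp, pp') ∈ ((O.prodDFA (sumDFA B)).restrict (Sset O B F)).E) :
    (pp, pp') ∈ (O.prodDFA (sumDFA B)).E ∧ pp ∈ Sset O B F ∧ pp' ∈ Sset O B F :=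
  ⟨h.1, h.2.1, h.2.2⟩

lemma RE_intro {pp pp' : V × (Q ⊕ Q)} (he : (pp, pp') ∈ (O.prodDFA (sumDFA B)).E)
    (h1 : pp ∈ Sset O B F) (h2 : pp' ∈ Sset O B F) :
    (pp, pp') ∈ ((O.prodDFA (sumDFA B)).restrict (Sset O B F)).E :=
  ⟨he, h1, h2⟩

lemma Rsucc [Finite V] [Finite Q] (hwf : O.WF) (hB : ∀ q ∈ F, ∀ c, B.step q c = q) :
    ∀ pp ∈ Sset O B F, ∃ pp',
      (pp, pp') ∈ ((O.prodDFA (sumDFA B)).restrict (Sset O B F)).E := by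
  intro pp hpp
  obtain ⟨pp', hpp', he⟩ := Sset_rest O B F hwf hB pp hpp
  exact ⟨pp', RE_intro O B F he hpp hpp'⟩

lemma RΓ (p : V × (Q ⊕ Q)) :
    ((O.prodDFA (sumDFA B)).restrict (Sset O B F)).Γ p = O.Γ p.1 := rfl

lemma sumDFA_eval (B : DFA C Q) (w : List C) :
    List.foldl (sumDFA B).step (Sum.inl B.start) w = Sum.inl (B.eval w) :=
  sumDFA_foldl_inl B w B.start

end Sset

end Stmt13Aux
namespace Stmt13Aux

open Arena

variable {V C Q : Type}

lemma mem_inlImage {s : Set (V × Q)} {v : V} {q : Q} :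
    (v, (Sum.inl q : Q ⊕ Q)) ∈ (fun p : V × Q => (p.1, (Sum.inl p.2 : Q ⊕ Q))) '' s
      ↔ (v, q) ∈ s := by
  constructor
  · rintro ⟨p, hp, heq⟩
    simp only [Prod.mk.injEq] at heq
    exact (Prod.ext heq.1 (Sum.inl.inj heq.2) : p = (v, q)) ▸ hp
  · intro hp
    exact ⟨(v, q), hp, rfl⟩

section Patch

variable (O : Arena V C) (B : DFA C Q) (F : Set Q)

open Classical in
noncomputable def patch2 (σ2 : List C → V → V) : List C → V × (Q ⊕ Q) → V × (Q ⊕ Q) :=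
  fun w pp =>
    if pp.1 ∉ O.V1 ∧ pp ∈ Sset O B F ∧
        (σ2 w pp.1, (sumDFA B).step pp.2 (O.Γ pp.1)) ∈ Sset O B F
    then (σ2 w pp.1, (sumDFA B).step pp.2 (O.Γ pp.1))
    else dfl ((O.prodDFA (sumDFA B)).restrict (Sset O B F)) pp

open Classical in
noncomputable def patch1 (σ1 : List C → V → V) : List C → V × (Q ⊕ Q) → V × (Q ⊕ Q) :=
  fun w pp =>
    if pp.1 ∈ O.V1 ∧ pp ∈ Sset O B F ∧
        (σ1 w pp.1, (sumDFA B).step pp.2 (O.Γ pp.1)) ∈ Sset O B F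
    then (σ1 w pp.1, (sumDFA B).step pp.2 (O.Γ pp.1))
    else dfl ((O.prodDFA (sumDFA B)).restrict (Sset O B F)) pp

lemma patch2_eq (σ2 : List C → V → V) (w : List C) (pp : V × (Q ⊕ Q))
    (hc : pp.1 ∉ O.V1 ∧ pp ∈ Sset O B F ∧
      (σ2 w pp.1, (sumDFA B).step pp.2 (O.Γ pp.1)) ∈ Sset O B F) :
    patch2 O B F σ2 w pp = (σ2 w pp.1, (sumDFA B).step pp.2 (O.Γ pp.1)) := by
  simp only [patch2]
  rw [if_pos hc]

lemma patch1_eq (σ1 : List C → V → V) (w : List C) (pp : V × (Q ⊕ Q))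
    (hc : pp.1 ∈ O.V1 ∧ pp ∈ Sset O B F ∧
      (σ1 w pp.1, (sumDFA B).step pp.2 (O.Γ pp.1)) ∈ Sset O B F) :
    patch1 O B F σ1 w pp = (σ1 w pp.1, (sumDFA B).step pp.2 (O.Γ pp.1)) := by
  simp only [patch1]
  rw [if_pos hc]

lemma patch2_valid [Finite V] [Finite Q] (hwf : O.WF) (hB : ∀ q ∈ F, ∀ c, B.step q c = q)
    {σ2 : List C → V → V} (hσ2 : O.Valid2 σ2) :
    ((O.prodDFA (sumDFA B)).restrict (Sset O B F)).Valid2 (patch2 O B F σ2) := by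
  intro w pp hpp
  rcases pp with ⟨v, k⟩
  obtain ⟨hv2, hS⟩ := (mem_RV2 O B F).mp hpp
  simp only [patch2]
  by_cases hc : v ∉ O.V1 ∧ (v, k) ∈ Sset O B F ∧
      (σ2 w v, (sumDFA B).step k (O.Γ v)) ∈ Sset O B F
  · rw [if_pos hc]
    exact RE_intro O B F ⟨hσ2 w v hv2, rfl⟩ hS hc.2.2
  · rw [if_neg hc]
    exact dfl_edge _ (Rsucc O B F hwf hB _ hS)

lemma patch1_valid [Finite V] [Finite Q] (hwf : O.WF) (hB : ∀ q ∈ F, ∀ c, B.step q c = q)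
    {σ1 : List C → V → V} (hσ1 : O.Valid1 σ1) :
    ((O.prodDFA (sumDFA B)).restrict (Sset O B F)).Valid1 (patch1 O B F σ1) := by
  intro w pp hpp
  rcases pp with ⟨v, k⟩
  obtain ⟨hv1, hS⟩ := (mem_RV1 O B F).mp hpp
  simp only [patch1]
  by_cases hc : v ∈ O.V1 ∧ (v, k) ∈ Sset O B F ∧
      (σ1 w v, (sumDFA B).step k (O.Γ v)) ∈ Sset O B F
  · rw [if_pos hc]
    exact RE_intro O B F ⟨hσ1 w v hv1, rfl⟩ hS hc.2.2
  · rw [if_neg hc]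
    exact dfl_edge _ (Rsucc O B F hwf hB _ hS)

end Patch

end Stmt13Aux
open Stmt13Aux

/-- Lemma 12: conjunction with a regular language, with memory bounds. -/
theorem stmt13 {V C : Type} [Fintype V] (O : Arena V C) (hwf : O.WF)
    (W : Set (ℕ → C)) (m : ℕ → ℕ)
    (h : ∀ (Q' : Type) (instQ' : Fintype Q') (A' : DFA C Q') (S : Set (V × Q')),
      S ⊆ (O.prodDFA A').vertices →
      (∀ pp ∈ S, ∃ pp' ∈ S, (pp, pp') ∈ (O.prodDFA A').E) →
      ∀ v ∈ ((O.prodDFA A').restrict S).vertices,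
        (∃ σ1, ((O.prodDFA A').restrict S).Valid1 σ1 ∧
          Arena.IsFMSize ((O.prodDFA A').restrict S).V1 σ1
            (m (((O.prodDFA A').restrict S).vertices.ncard)) ∧
          ((O.prodDFA A').restrict S).Winning1 W σ1 [] v) ∨
        (∃ σ2, ((O.prodDFA A').restrict S).Valid2 σ2 ∧
          Arena.IsFMSize ((O.prodDFA A').restrict S).V2 σ2
            (m (((O.prodDFA A').restrict S).vertices.ncard)) ∧
          ((O.prodDFA A').restrict S).Winning2 W σ2 [] v))
    (Q : Type) [Fintype Q] (A : DFA C Q) :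
    ∀ v0 ∈ O.vertices,
      (∃ σ1, O.Valid1 σ1 ∧
        Arena.IsFMSize O.V1 σ1 (Fintype.card Q * m (O.vertices.ncard * Fintype.card Q)) ∧
        O.Winning1 {ρ | ρ ∈ W ∧ ∀ n : ℕ, seqPrefix ρ n ∉ A.accepts} σ1 [] v0) ∨
      (∃ σ2, O.Valid2 σ2 ∧
        Arena.IsFMSize O.V2 σ2 (Fintype.card Q * m (O.vertices.ncard * Fintype.card Q)) ∧
        O.Winning2 {ρ | ρ ∈ W ∧ ∀ n : ℕ, seqPrefix ρ n ∉ A.accepts} σ2 [] v0) := by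
  classical
  intro v0 hv0
  have hBstick : ∀ q ∈ A.accept, ∀ c, (sticky A).step q c = q :=
    fun q hq c => sticky_step_mem A hq c
  have hSsub := Sset_sub O (sticky A) A.accept
  have hSrest := Sset_rest O (sticky A) A.accept hwf hBstick
  have hNcard := Rncard O (sticky A) A.accept
  have heval : ∀ w : List C,
      List.foldl (sumDFA (sticky A)).step (Sum.inl A.start : Q ⊕ Q) w
        = Sum.inl ((sticky A).eval w) :=
    fun w => sumDFA_eval (sticky A) w
  by_cases hsafe : (v0, A.start) ∈ SafeSet O (sticky A) A.accept
  · -- start in the safe region: apply the hypothesis there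
    have hv' : (v0, (Sum.inl A.start : Q ⊕ Q)) ∈
        ((O.prodDFA (sumDFA (sticky A))).restrict (Sset O (sticky A) A.accept)).vertices := by
      rw [Rvertices]
      exact (mem_Sset_inl O (sticky A) A.accept).mpr hsafe
    rcases h (Q ⊕ Q) inferInstance (sumDFA (sticky A)) (Sset O (sticky A) A.accept)
        hSsub hSrest (v0, Sum.inl A.start) hv' with
      ⟨σ1R, hval1R, hfm1R, hwin1R⟩ | ⟨σ2R, hval2R, hfm2R, hwin2R⟩
    · -- Player 1 wins
      left
      rw [hNcard] at hfm1R
      obtain ⟨M, instM, hMcard, m0, αu, αn, hmach⟩ := hfm1R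
      refine ⟨fun w v => strat1 O (sticky A) A.accept αn ((sticky A).eval w)
          (List.foldl αu m0 w) v, ?_, ?_, ?_⟩
      · -- validity
        intro w v hv1
        by_cases hc : (v, (sticky A).eval w) ∈ SafeSet O (sticky A) A.accept ∧ v ∈ O.V1
        · show (v, strat1 O (sticky A) A.accept αn ((sticky A).eval w)
            (List.foldl αu m0 w) v) ∈ O.E
          simp only [strat1]
          rw [if_pos hc]
          have hppV1 : (v, (Sum.inl ((sticky A).eval w) : Q ⊕ Q)) ∈
              ((O.prodDFA (sumDFA (sticky A))).restrict (Sset O (sticky A) A.accept)).V1 :=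
            (mem_RV1 O (sticky A) A.accept).mpr
              ⟨hc.2, (mem_Sset_inl O (sticky A) A.accept).mpr hc.1⟩
          have hRe := hval1R w _ hppV1
          rw [hmach w _ hppV1] at hRe
          exact (RE_elim O (sticky A) A.accept hRe).1.1
        · show (v, strat1 O (sticky A) A.accept αn ((sticky A).eval w)
            (List.foldl αu m0 w) v) ∈ O.E
          simp only [strat1]
          rw [if_neg hc]
          exact dfl_edge O (hwf.2.2 v (Or.inl hv1))
      · -- finite memory
        exact isFMSize_pair instM hMcard (sticky A) m0 αu
          (strat1 O (sticky A) A.accept αn) O.V1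
      · -- winning
        intro σ2 hσ2
        have h0 : ((v0, (Sum.inl A.start : Q ⊕ Q))) ∈
            (fun p : V × Q => (p.1, (Sum.inl p.2 : Q ⊕ Q))) ''
              SafeSet O (sticky A) A.accept :=
          mem_inlImage.mpr hsafe
        have hsim := sim O
          ((O.prodDFA (sumDFA (sticky A))).restrict (Sset O (sticky A) A.accept))
          (RΓ O (sticky A) A.accept)
          (O.combine (fun w v => strat1 O (sticky A) A.accept αn ((sticky A).eval w)
            (List.foldl αu m0 w) v) σ2)
          (((O.prodDFA (sumDFA (sticky A))).restrict
            (Sset O (sticky A) A.accept)).combine σ1R (patch2 O (sticky A) A.accept σ2))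
          (sumDFA (sticky A)).step (Sum.inl A.start)
          ((fun p : V × Q => (p.1, (Sum.inl p.2 : Q ⊕ Q))) '' SafeSet O (sticky A) A.accept)
          v0 h0 (by
          -- the simulation invariant
          intro n hInv
          rw [heval] at hInv ⊢
          have hSa2 := mem_inlImage.mp hInv
          set w := (O.stepSeq (O.combine (fun w v => strat1 O (sticky A) A.accept αn
            ((sticky A).eval w) (List.foldl αu m0 w) v) σ2) [] v0 n).1 with hwdef
          set v := (O.stepSeq (O.combine (fun w v => strat1 O (sticky A) A.accept αn
            ((sticky A).eval w) (List.foldl αu m0 w) v) σ2) [] v0 n).2 with hvdef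
          have hppS : (v, (Sum.inl ((sticky A).eval w) : Q ⊕ Q)) ∈
              Sset O (sticky A) A.accept :=
            (mem_Sset_inl O (sticky A) A.accept).mpr hSa2
          by_cases hv1 : v ∈ O.V1
          · have hppV1 : (v, (Sum.inl ((sticky A).eval w) : Q ⊕ Q)) ∈
                ((O.prodDFA (sumDFA (sticky A))).restrict (Sset O (sticky A) A.accept)).V1 :=
              (mem_RV1 O (sticky A) A.accept).mpr ⟨hv1, hppS⟩
            obtain ⟨hE', -, htgtS⟩ :=
              RE_elim O (sticky A) A.accept (hval1R w _ hppV1)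
            rw [combine_mem _ σ1R _ w hppV1, combine_mem O _ σ2 w hv1]
            have hsnd : (σ1R w (v, (Sum.inl ((sticky A).eval w) : Q ⊕ Q))).2
                = (Sum.inl ((sticky A).step ((sticky A).eval w) (O.Γ v)) : Q ⊕ Q) := hE'.2
            have hfst : (σ1R w (v, (Sum.inl ((sticky A).eval w) : Q ⊕ Q))).1
                = strat1 O (sticky A) A.accept αn ((sticky A).eval w)
                  (List.foldl αu m0 w) v := by
              rw [hmach w _ hppV1]
              simp only [strat1]
              rw [if_pos (⟨hSa2, hv1⟩ : _ ∧ _)]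
            have hTS : ((σ1R w (v, (Sum.inl ((sticky A).eval w) : Q ⊕ Q))).1,
                (sticky A).step ((sticky A).eval w) (O.Γ v)) ∈
                  SafeSet O (sticky A) A.accept := by
              have hre : σ1R w (v, (Sum.inl ((sticky A).eval w) : Q ⊕ Q))
                  = ((σ1R w (v, (Sum.inl ((sticky A).eval w) : Q ⊕ Q))).1,
                     (Sum.inl ((sticky A).step ((sticky A).eval w) (O.Γ v)) : Q ⊕ Q)) :=
                Prod.ext rfl hsnd
              rw [hre] at htgtS
              exact (mem_Sset_inl O (sticky A) A.accept).mp htgtS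
            exact ⟨Prod.ext hfst hsnd, mem_inlImage.mpr (hfst ▸ hTS)⟩
          · have hv2 : v ∈ O.V2 := hSa2.1.resolve_left hv1
            have hppnV1 : (v, (Sum.inl ((sticky A).eval w) : Q ⊕ Q)) ∉
                ((O.prodDFA (sumDFA (sticky A))).restrict (Sset O (sticky A) A.accept)).V1 :=
              fun hc => hv1 ((mem_RV1 O (sticky A) A.accept).mp hc).1
            have hTS : (σ2 w v, (sticky A).step ((sticky A).eval w) (O.Γ v)) ∈
                SafeSet O (sticky A) A.accept :=
              safe_v2 O (sticky A) A.accept hwf hSa2 hv2 _ ⟨hσ2 w v hv2, rfl⟩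
            have hcond : v ∉ O.V1 ∧
                (v, (Sum.inl ((sticky A).eval w) : Q ⊕ Q)) ∈ Sset O (sticky A) A.accept ∧
                (σ2 w v, (sumDFA (sticky A)).step (Sum.inl ((sticky A).eval w) : Q ⊕ Q)
                  (O.Γ v)) ∈ Sset O (sticky A) A.accept :=
              ⟨hv1, hppS, (mem_Sset_inl O (sticky A) A.accept).mpr hTS⟩
            rw [combine_not _ σ1R _ w hppnV1, combine_not O _ σ2 w hv1]
            exact ⟨patch2_eq O (sticky A) A.accept σ2 w _ hcond, mem_inlImage.mpr hTS⟩)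
        have hplayeq : ((O.prodDFA (sumDFA (sticky A))).restrict
              (Sset O (sticky A) A.accept)).play
                (((O.prodDFA (sumDFA (sticky A))).restrict
                  (Sset O (sticky A) A.accept)).combine σ1R (patch2 O (sticky A) A.accept σ2))
                [] (v0, Sum.inl A.start)
              = O.play (O.combine (fun w v => strat1 O (sticky A) A.accept αn
                  ((sticky A).eval w) (List.foldl αu m0 w) v) σ2) [] v0 := by
          funext i
          rw [play_nil, play_nil, (hsim i).2.1]
          rfl
        have hWin := hwin1R (patch2 O (sticky A) A.accept σ2)
          (patch2_valid O (sticky A) A.accept hwf hBstick hσ2)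
        rw [hplayeq] at hWin
        refine ⟨hWin, sticky_safe A _ ?_⟩
        intro n
        have hi := (hsim n).2.2
        rw [heval] at hi
        have hnF := safe_not_F O (sticky A) A.accept (mem_inlImage.mp hi)
        rwa [stepSeq_fst] at hnF
    · -- Player 2 wins (safe region)
      right
      rw [hNcard] at hfm2R
      obtain ⟨M, instM, hMcard, m0, αu, αn, hmach⟩ := hfm2R
      have hval2' : O.Valid2 (fun w v => strat2 O (sticky A) A.accept hwf αn
          ((sticky A).eval w) (List.foldl αu m0 w) v) := by
        intro w v hv2
        have hv1 : v ∉ O.V1 := fun hx => Set.disjoint_left.mp hwf.1 hx hv2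
        show (v, strat2 O (sticky A) A.accept hwf αn ((sticky A).eval w)
          (List.foldl αu m0 w) v) ∈ O.E
        simp only [strat2]
        by_cases hc1 : (v, (sticky A).eval w) ∈ SafeSet O (sticky A) A.accept ∧ v ∉ O.V1
        · rw [if_pos hc1]
          have hppV2 : (v, (Sum.inl ((sticky A).eval w) : Q ⊕ Q)) ∈
              ((O.prodDFA (sumDFA (sticky A))).restrict (Sset O (sticky A) A.accept)).V2 :=
            (mem_RV2 O (sticky A) A.accept).mpr
              ⟨hv2, (mem_Sset_inl O (sticky A) A.accept).mpr hc1.1⟩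
          have hRe := hval2R w _ hppV2
          rw [hmach w _ hppV2] at hRe
          exact (RE_elim O (sticky A) A.accept hRe).1.1
        · rw [if_neg hc1]
          by_cases hc2 : (v, (sticky A).eval w) ∈ Uset O (sticky A) A.accept ∧
              v ∉ O.V1 ∧ (sticky A).eval w ∉ A.accept
          · rw [if_pos hc2]
            exact (att_spec O (sticky A) A.accept hwf hc2).1.1
          · rw [if_neg hc2]
            exact dfl_edge O (hwf.2.2 v (Or.inr hv2))
      refine ⟨fun w v => strat2 O (sticky A) A.accept hwf αn ((sticky A).eval w)
          (List.foldl αu m0 w) v, hval2', ?_, ?_⟩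
      · exact isFMSize_pair instM hMcard (sticky A) m0 αu
          (strat2 O (sticky A) A.accept hwf αn) O.V2
      · -- winning
        intro σ1 hσ1
        by_cases hall : ∀ n, ((O.stepSeq (O.combine σ1 (fun w v => strat2 O (sticky A)
              A.accept hwf αn ((sticky A).eval w) (List.foldl αu m0 w) v)) [] v0 n).2,
            (sticky A).eval (O.stepSeq (O.combine σ1 (fun w v => strat2 O (sticky A)
              A.accept hwf αn ((sticky A).eval w) (List.foldl αu m0 w) v)) [] v0 n).1) ∈
            SafeSet O (sticky A) A.accept
        · -- the play stays in the safe region: simulate in the restricted game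
          have h0 : ((v0, (Sum.inl A.start : Q ⊕ Q))) ∈
              (fun p : V × Q => (p.1, (Sum.inl p.2 : Q ⊕ Q))) ''
                SafeSet O (sticky A) A.accept :=
            mem_inlImage.mpr hsafe
          have hsim := sim O
            ((O.prodDFA (sumDFA (sticky A))).restrict (Sset O (sticky A) A.accept))
            (RΓ O (sticky A) A.accept)
            (O.combine σ1 (fun w v => strat2 O (sticky A) A.accept hwf αn
              ((sticky A).eval w) (List.foldl αu m0 w) v))
            (((O.prodDFA (sumDFA (sticky A))).restrict
              (Sset O (sticky A) A.accept)).combine (patch1 O (sticky A) A.accept σ1) σ2R)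
            (sumDFA (sticky A)).step (Sum.inl A.start)
            ((fun p : V × Q => (p.1, (Sum.inl p.2 : Q ⊕ Q))) '' SafeSet O (sticky A) A.accept)
            v0 h0 (by
            intro n hInv
            rw [heval] at hInv ⊢
            have hSa2 := mem_inlImage.mp hInv
            set w := (O.stepSeq (O.combine σ1 (fun w v => strat2 O (sticky A) A.accept hwf αn
              ((sticky A).eval w) (List.foldl αu m0 w) v)) [] v0 n).1 with hwdef
            set v := (O.stepSeq (O.combine σ1 (fun w v => strat2 O (sticky A) A.accept hwf αn
              ((sticky A).eval w) (List.foldl αu m0 w) v)) [] v0 n).2 with hvdef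
            have hppS : (v, (Sum.inl ((sticky A).eval w) : Q ⊕ Q)) ∈
                Sset O (sticky A) A.accept :=
              (mem_Sset_inl O (sticky A) A.accept).mpr hSa2
            by_cases hv1 : v ∈ O.V1
            · -- Player 1 move: stays safe by `hall (n+1)`
              have hppV1 : (v, (Sum.inl ((sticky A).eval w) : Q ⊕ Q)) ∈
                  ((O.prodDFA (sumDFA (sticky A))).restrict
                    (Sset O (sticky A) A.accept)).V1 :=
                (mem_RV1 O (sticky A) A.accept).mpr ⟨hv1, hppS⟩
              have hnext := hall (n + 1)
              rw [stepSeq_succ] at hnext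
              have hev : (sticky A).eval (w ++ [O.Γ v])
                  = (sticky A).step ((sticky A).eval w) (O.Γ v) :=
                DFA.eval_append_singleton _ _ _
              rw [hev, combine_mem O σ1 _ w hv1] at hnext
              have hcond : v ∈ O.V1 ∧
                  (v, (Sum.inl ((sticky A).eval w) : Q ⊕ Q)) ∈ Sset O (sticky A) A.accept ∧
                  (σ1 w v, (sumDFA (sticky A)).step (Sum.inl ((sticky A).eval w) : Q ⊕ Q)
                    (O.Γ v)) ∈ Sset O (sticky A) A.accept :=
                ⟨hv1, hppS, (mem_Sset_inl O (sticky A) A.accept).mpr hnext⟩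
              rw [combine_mem _ (patch1 O (sticky A) A.accept σ1) σ2R w hppV1,
                combine_mem O σ1 _ w hv1]
              exact ⟨patch1_eq O (sticky A) A.accept σ1 w _ hcond, mem_inlImage.mpr hnext⟩
            · -- Player 2 move: the restricted strategy
              have hv2 : v ∈ O.V2 := hSa2.1.resolve_left hv1
              have hppnV1 : (v, (Sum.inl ((sticky A).eval w) : Q ⊕ Q)) ∉
                  ((O.prodDFA (sumDFA (sticky A))).restrict
                    (Sset O (sticky A) A.accept)).V1 :=
                fun hc => hv1 ((mem_RV1 O (sticky A) A.accept).mp hc).1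
              have hppV2 : (v, (Sum.inl ((sticky A).eval w) : Q ⊕ Q)) ∈
                  ((O.prodDFA (sumDFA (sticky A))).restrict
                    (Sset O (sticky A) A.accept)).V2 :=
                (mem_RV2 O (sticky A) A.accept).mpr ⟨hv2, hppS⟩
              obtain ⟨hE', -, htgtS⟩ :=
                RE_elim O (sticky A) A.accept (hval2R w _ hppV2)
              rw [combine_not _ (patch1 O (sticky A) A.accept σ1) σ2R w hppnV1,
                combine_not O σ1 _ w hv1]
              have hsnd : (σ2R w (v, (Sum.inl ((sticky A).eval w) : Q ⊕ Q))).2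
                  = (Sum.inl ((sticky A).step ((sticky A).eval w) (O.Γ v)) : Q ⊕ Q) := hE'.2
              have hfst : (σ2R w (v, (Sum.inl ((sticky A).eval w) : Q ⊕ Q))).1
                  = strat2 O (sticky A) A.accept hwf αn ((sticky A).eval w)
                    (List.foldl αu m0 w) v := by
                rw [hmach w _ hppV2]
                simp only [strat2]
                rw [if_pos (⟨hSa2, hv1⟩ : _ ∧ _)]
              have hTS : ((σ2R w (v, (Sum.inl ((sticky A).eval w) : Q ⊕ Q))).1,
                  (sticky A).step ((sticky A).eval w) (O.Γ v)) ∈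
                    SafeSet O (sticky A) A.accept := by
                have hre : σ2R w (v, (Sum.inl ((sticky A).eval w) : Q ⊕ Q))
                    = ((σ2R w (v, (Sum.inl ((sticky A).eval w) : Q ⊕ Q))).1,
                       (Sum.inl ((sticky A).step ((sticky A).eval w) (O.Γ v)) : Q ⊕ Q)) :=
                  Prod.ext rfl hsnd
                rw [hre] at htgtS
                exact (mem_Sset_inl O (sticky A) A.accept).mp htgtS
              exact ⟨Prod.ext hfst hsnd, mem_inlImage.mpr (hfst ▸ hTS)⟩)
          have hplayeq : ((O.prodDFA (sumDFA (sticky A))).restrict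
                (Sset O (sticky A) A.accept)).play
                  (((O.prodDFA (sumDFA (sticky A))).restrict
                    (Sset O (sticky A) A.accept)).combine
                      (patch1 O (sticky A) A.accept σ1) σ2R)
                  [] (v0, Sum.inl A.start)
                = O.play (O.combine σ1 (fun w v => strat2 O (sticky A) A.accept hwf αn
                    ((sticky A).eval w) (List.foldl αu m0 w) v)) [] v0 := by
            funext i
            rw [play_nil, play_nil, (hsim i).2.1]
            rfl
          have hWin := hwin2R (patch1 O (sticky A) A.accept σ1)
            (patch1_valid O (sticky A) A.accept hwf hBstick hσ1)
          rw [hplayeq] at hWin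
          intro hmem
          exact hWin hmem.1
        · -- the play leaves the safe region: the attractor forces acceptance
          push_neg at hall
          obtain ⟨n0, hn0⟩ := hall
          have hvalc : ∀ (w : List C), ∀ v ∈ O.vertices,
              (v, O.combine σ1 (fun w v => strat2 O (sticky A) A.accept hwf αn
                ((sticky A).eval w) (List.foldl αu m0 w) v) w v) ∈ O.E :=
            combine_edge O hwf hσ1 hval2'
          have hvert := stepSeq_mem_vertices O hwf hvalc hv0
          have hU0 : ((O.stepSeq (O.combine σ1 (fun w v => strat2 O (sticky A) A.accept hwf
              αn ((sticky A).eval w) (List.foldl αu m0 w) v)) [] v0 n0).2,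
              (sticky A).eval (O.stepSeq (O.combine σ1 (fun w v => strat2 O (sticky A)
                A.accept hwf αn ((sticky A).eval w) (List.foldl αu m0 w) v)) [] v0 n0).1) ∈
              Uset O (sticky A) A.accept := by
            by_contra hU
            exact hn0 ⟨hvert n0, hU⟩
          have hatt : ∀ n, ((O.stepSeq (O.combine σ1 (fun w v => strat2 O (sticky A)
                A.accept hwf αn ((sticky A).eval w) (List.foldl αu m0 w) v)) [] v0 n).2,
              (sticky A).eval (O.stepSeq (O.combine σ1 (fun w v => strat2 O (sticky A)
                A.accept hwf αn ((sticky A).eval w) (List.foldl αu m0 w) v)) [] v0 n).1) ∈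
                Uset O (sticky A) A.accept →
              (O.stepSeq (O.combine σ1 (fun w v => strat2 O (sticky A) A.accept hwf αn
                ((sticky A).eval w) (List.foldl αu m0 w) v)) [] v0 n).2 ∉ O.V1 →
              (sticky A).eval (O.stepSeq (O.combine σ1 (fun w v => strat2 O (sticky A)
                A.accept hwf αn ((sticky A).eval w) (List.foldl αu m0 w) v)) [] v0 n).1 ∉
                A.accept →
              O.combine σ1 (fun w v => strat2 O (sticky A) A.accept hwf αn
                  ((sticky A).eval w) (List.foldl αu m0 w) v)
                (O.stepSeq (O.combine σ1 (fun w v => strat2 O (sticky A) A.accept hwf αn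
                  ((sticky A).eval w) (List.foldl αu m0 w) v)) [] v0 n).1
                (O.stepSeq (O.combine σ1 (fun w v => strat2 O (sticky A) A.accept hwf αn
                  ((sticky A).eval w) (List.foldl αu m0 w) v)) [] v0 n).2
              = (att O (sticky A) A.accept hwf
                  ((O.stepSeq (O.combine σ1 (fun w v => strat2 O (sticky A) A.accept hwf αn
                    ((sticky A).eval w) (List.foldl αu m0 w) v)) [] v0 n).2,
                   (sticky A).eval (O.stepSeq (O.combine σ1 (fun w v => strat2 O (sticky A)
                    A.accept hwf αn ((sticky A).eval w) (List.foldl αu m0 w) v)) [] v0 n).1)).1 := by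
            intro n hU h1 hF
            rw [combine_not O σ1 _ _ h1]
            exact strat2_att O (sticky A) A.accept hwf αn
              (fun hc => (hc.1.2 : _ ∉ Uset O (sticky A) A.accept) hU) ⟨hU, h1, hF⟩
          obtain ⟨j, hj⟩ := force O (sticky A) A.accept hwf _ v0
            (fun n => hvalc _ _ (hvert n)) hatt _ n0 hU0 le_rfl
          rw [stepSeq_fst] at hj
          obtain ⟨n', hn'⟩ := sticky_hit A _ ⟨j, hj⟩
          intro hmem
          exact hmem.2 n' hn'
  · -- start outside the safe region: pure attractor for Player 2
    have hU0 : (v0, A.start) ∈ Uset O (sticky A) A.accept := by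
      by_contra hU
      exact hsafe ⟨hv0, hU⟩
    have hv' : (v0, (Sum.inr A.start : Q ⊕ Q)) ∈
        ((O.prodDFA (sumDFA (sticky A))).restrict (Sset O (sticky A) A.accept)).vertices := by
      rw [Rvertices]
      exact (mem_Sset_inr O (sticky A) A.accept).mpr hU0
    have hm1 : 1 ≤ m (O.vertices.ncard * Fintype.card Q) := by
      rcases h (Q ⊕ Q) inferInstance (sumDFA (sticky A)) (Sset O (sticky A) A.accept)
          hSsub hSrest (v0, Sum.inr A.start) hv' with
        ⟨σR, -, hfm, -⟩ | ⟨σR, -, hfm, -⟩ <;>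
      · rw [hNcard] at hfm
        obtain ⟨M, iM, hc, m0, -⟩ := hfm
        exact le_trans (@Fintype.card_pos M iM ⟨m0⟩) hc
    right
    have hval3 : O.Valid2 (fun w v => strat3 O (sticky A) A.accept hwf
        ((sticky A).eval w) v) := by
      intro w v hv2
      show (v, strat3 O (sticky A) A.accept hwf ((sticky A).eval w) v) ∈ O.E
      simp only [strat3]
      by_cases hc2 : (v, (sticky A).eval w) ∈ Uset O (sticky A) A.accept ∧
          v ∉ O.V1 ∧ (sticky A).eval w ∉ A.accept
      · rw [if_pos hc2]
        exact (att_spec O (sticky A) A.accept hwf hc2).1.1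
      · rw [if_neg hc2]
        exact dfl_edge O (hwf.2.2 v (Or.inr hv2))
    refine ⟨fun w v => strat3 O (sticky A) A.accept hwf ((sticky A).eval w) v,
      hval3, ?_, ?_⟩
    · have := isFMSize_pair (V := V) (inferInstance : Fintype PUnit)
        (by simpa using hm1 : Fintype.card PUnit ≤ m (O.vertices.ncard * Fintype.card Q))
        (sticky A) PUnit.unit (fun _ _ => PUnit.unit)
        (fun q _ v => strat3 O (sticky A) A.accept hwf q v) O.V2
      exact this
    · intro σ1 hσ1
      have hvalc : ∀ (w : List C), ∀ v ∈ O.vertices,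
          (v, O.combine σ1 (fun w v => strat3 O (sticky A) A.accept hwf
            ((sticky A).eval w) v) w v) ∈ O.E :=
        combine_edge O hwf hσ1 hval3
      have hvert := stepSeq_mem_vertices O hwf hvalc hv0
      have hatt : ∀ n, ((O.stepSeq (O.combine σ1 (fun w v => strat3 O (sticky A)
            A.accept hwf ((sticky A).eval w) v)) [] v0 n).2,
          (sticky A).eval (O.stepSeq (O.combine σ1 (fun w v => strat3 O (sticky A)
            A.accept hwf ((sticky A).eval w) v)) [] v0 n).1) ∈
            Uset O (sticky A) A.accept →
          (O.stepSeq (O.combine σ1 (fun w v => strat3 O (sticky A) A.accept hwf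
            ((sticky A).eval w) v)) [] v0 n).2 ∉ O.V1 →
          (sticky A).eval (O.stepSeq (O.combine σ1 (fun w v => strat3 O (sticky A)
            A.accept hwf ((sticky A).eval w) v)) [] v0 n).1 ∉ A.accept →
          O.combine σ1 (fun w v => strat3 O (sticky A) A.accept hwf
              ((sticky A).eval w) v)
            (O.stepSeq (O.combine σ1 (fun w v => strat3 O (sticky A) A.accept hwf
              ((sticky A).eval w) v)) [] v0 n).1
            (O.stepSeq (O.combine σ1 (fun w v => strat3 O (sticky A) A.accept hwf
              ((sticky A).eval w) v)) [] v0 n).2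
          = (att O (sticky A) A.accept hwf
              ((O.stepSeq (O.combine σ1 (fun w v => strat3 O (sticky A) A.accept hwf
                ((sticky A).eval w) v)) [] v0 n).2,
               (sticky A).eval (O.stepSeq (O.combine σ1 (fun w v => strat3 O (sticky A)
                A.accept hwf ((sticky A).eval w) v)) [] v0 n).1)).1 := by
        intro n hU h1 hF
        rw [combine_not O σ1 _ _ h1]
        exact strat3_att O (sticky A) A.accept hwf ⟨hU, h1, hF⟩
      obtain ⟨j, hj⟩ := force O (sticky A) A.accept hwf _ v0
        (fun n => hvalc _ _ (hvert n)) hatt _ 0 hU0 le_rfl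
      rw [stepSeq_fst] at hj
      obtain ⟨n', hn'⟩ := sticky_hit A _ ⟨j, hj⟩
      intro hmem
      exact hmem.2 n' hn'
end

section
/- Let C = {a, b} and consider the one-player arena with V₁ = {s, t}, V₂ = ∅, Γ(s) = b, Γ(t) = a, and all four edges present. Assign weights weight(b) = 1 and weight(a) = −1, and let χ ∈ C^ω be the sequence b a b b a a b b b a a a ⋯ consisting of consecutive blocks bⁿaⁿ for n = 1, 2, 3, …. Let W = W₀ ∩ {ρ ∈ C^ω : for all n, Σ_{i<n} weight(ρ(i)) ≥ 0}, where W₀ = {ρ : ρ is eventually constant equal to a} ∪ {χ}. Then Player 1 has a winning strategy from (ε, s) in the game (O, W), but Player 1 has no finite-memory winning strategy from (ε, s). -/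
/-- The two-letter alphabet `{a, b}`. -/
inductive AB : Type | a | b
  deriving DecidableEq

/-- Weights: `b` gives `+1` and `a` gives `-1`. -/
def wAB : AB → ℤ
  | AB.b => 1
  | AB.a => -1

/-- The index `n ≥ 1` of the block `bⁿaⁿ` containing position `i`:
the least `n` with `i < n(n+1)`. -/
def blockIdx (i : ℕ) : ℕ :=
  Nat.find (show ∃ nn : ℕ, i < nn * (nn + 1) from ⟨i + 1, by nlinarith⟩)

/-- The sequence `χ = b a b b a a b b b a a a ⋯` of consecutive blocks `bⁿaⁿ`. -/
def chi (i : ℕ) : AB :=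
  if i - blockIdx i * (blockIdx i - 1) < blockIdx i then AB.b else AB.a

/-- The two vertices `s` (colored `b`) and `t` (colored `a`). -/
inductive V14 : Type | s | t

/-- The one-player arena with all four edges present. -/
def O14 : Arena V14 AB :=
  ⟨Set.univ, ∅, Set.univ, fun v => match v with | V14.s => AB.b | V14.t => AB.a⟩

/-- The winning condition `W₀ ∩ energy`. -/
def W14 : Set (ℕ → AB) :=
  {ρ | ((∃ N : ℕ, ∀ k ≥ N, ρ k = AB.a) ∨ ρ = chi) ∧
    ∀ n : ℕ, 0 ≤ ∑ i ∈ Finset.range n, wAB (ρ i)}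


/-! ### Auxiliary lemmas -/

instance : Finite V14 :=
  Finite.of_injective (fun v => match v with | V14.s => true | V14.t => false)
    (by intro a b h; cases a <;> cases b <;> simp_all)

lemma blockIdx_isLeast (m : ℕ) :
    m < blockIdx m * (blockIdx m + 1) ∧ ∀ k < blockIdx m, ¬ m < k * (k + 1) := by
  have h : ∃ nn : ℕ, m < nn * (nn + 1) := ⟨m + 1, by nlinarith⟩
  have hdef : blockIdx m = Nat.find h := rfl
  rw [hdef]
  exact ⟨Nat.find_spec h, fun k hk => Nat.find_min h hk⟩

lemma blockIdx_pos (m : ℕ) : 1 ≤ blockIdx m := by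
  have h := (blockIdx_isLeast m).1
  by_contra hc
  have : blockIdx m = 0 := by omega
  rw [this] at h; omega

lemma blockIdx_ge (m : ℕ) : blockIdx m * (blockIdx m - 1) ≤ m := by
  obtain ⟨h1, h2⟩ := blockIdx_isLeast m
  have hp := blockIdx_pos m
  obtain ⟨k, hk⟩ : ∃ k, blockIdx m = k + 1 := ⟨blockIdx m - 1, by omega⟩
  have h3 := h2 k (by omega)
  rw [hk]
  simp only [Nat.add_sub_cancel]
  rw [Nat.mul_comm]
  omega

lemma blockIdx_eq {x n : ℕ} (h1 : 1 ≤ n) (h2 : n * (n - 1) ≤ x) (h3 : x < n * (n + 1)) :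
    blockIdx x = n := by
  obtain ⟨hs, hmin⟩ := blockIdx_isLeast x
  have hle : blockIdx x ≤ n := by
    by_contra h
    exact hmin n (by omega) h3
  have hge : n ≤ blockIdx x := by
    by_contra h
    push_neg at h
    have hm : blockIdx x * (blockIdx x + 1) ≤ n * (n - 1) := by
      rw [show n * (n-1) = (n-1) * n from Nat.mul_comm _ _]
      exact Nat.mul_le_mul (by omega) (by omega)
    omega
  omega

lemma chi_eval (m : ℕ) :
    chi m = if m - blockIdx m * (blockIdx m - 1) < blockIdx m then AB.b else AB.a := rfl

lemma chi_b' {n : ℕ} (h : 1 ≤ n) : chi (n * (n - 1)) = AB.b := by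
  have hb : blockIdx (n * (n - 1)) = n :=
    blockIdx_eq h le_rfl (Nat.mul_lt_mul_of_pos_left (by omega) (by omega))
  rw [chi_eval, hb]
  simp [Nat.sub_self]
  omega

lemma chi_a' {n j : ℕ} (h1 : 1 ≤ n) (h2 : n * n ≤ j) (h3 : j < n * n + n) : chi j = AB.a := by
  obtain ⟨k, rfl⟩ : ∃ k, n = k + 1 := ⟨n - 1, by omega⟩
  have e1 : (k+1) * ((k+1) - 1) + (k+1) = (k+1) * (k+1) := by simp; ring
  have e2 : (k+1) * ((k+1) + 1) = (k+1) * (k+1) + (k+1) := by ring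
  have hb : blockIdx j = k + 1 := blockIdx_eq h1 (by omega) (by omega)
  rw [chi_eval, hb]
  have e3 : (k+1) * ((k+1) - 1) = (k+1) * k := by simp
  have : ¬ (j - (k+1) * ((k+1) - 1) < k + 1) := by omega
  simp [this]
  omega

lemma chi_zero : chi 0 = AB.b := by
  have := chi_b' (n := 1) le_rfl
  simpa using this

lemma blockIdx_zero : blockIdx 0 = 1 := blockIdx_eq le_rfl (by simp) (by norm_num)

lemma chi_sum (m : ℕ) : ∑ i ∈ Finset.range m, wAB (chi i) =
    if m - blockIdx m * (blockIdx m - 1) < blockIdx m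
    then ((m : ℤ) - (blockIdx m * (blockIdx m - 1) : ℕ))
    else (2 * (blockIdx m : ℤ) + (blockIdx m * (blockIdx m - 1) : ℕ) - m) := by
  induction m with
  | zero => simp [blockIdx_zero]
  | succ m ih =>
    obtain ⟨hbound, -⟩ := blockIdx_isLeast m
    have hge := blockIdx_ge m
    have hpos := blockIdx_pos m
    obtain ⟨k, hk⟩ : ∃ k, blockIdx m = k + 1 := ⟨blockIdx m - 1, by omega⟩
    rw [hk] at hbound hge ih
    have e3 : (k+1) * ((k+1) - 1) = (k+1) * k := by simp
    have etop : (k+1) * ((k+1) + 1) = (k+1) * k + 2 * (k+1) := by ring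
    rw [Finset.sum_range_succ, ih, chi_eval m, hk, e3]
    rw [e3] at hge ih
    rw [etop] at hbound
    by_cases hcase : m + 1 < (k+1) * k + 2 * (k+1)
    · have hb2 : blockIdx (m+1) = k + 1 := blockIdx_eq (by omega) (by omega) (by omega)
      rw [hb2, e3]
      split_ifs with c1 c2 c3 <;> simp only [wAB] <;> omega
    · have hm1 : m + 1 = (k+1) * k + 2 * (k+1) := by omega
      have e4 : (k+2) * ((k+2) - 1) = (k+1) * k + 2 * (k+1) := by simp; ring
      have e5 : (k+2) * ((k+2) + 1) = (k+1) * k + 4 * k + 6 := by ring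
      have hb2 : blockIdx (m+1) = k + 2 := blockIdx_eq (by omega) (by omega) (by omega)
      rw [hb2, e4]
      split_ifs with c1 c2 c3 <;> simp only [wAB] <;> omega

lemma chi_sum_nonneg (m : ℕ) : 0 ≤ ∑ i ∈ Finset.range m, wAB (chi i) := by
  rw [chi_sum]
  obtain ⟨hbound, -⟩ := blockIdx_isLeast m
  have hge := blockIdx_ge m
  have hpos := blockIdx_pos m
  obtain ⟨k, hk⟩ : ∃ k, blockIdx m = k + 1 := ⟨blockIdx m - 1, by omega⟩
  rw [hk] at hbound hge ⊢
  have e3 : (k+1) * ((k+1) - 1) = (k+1) * k := by simp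
  have etop : (k+1) * ((k+1) + 1) = (k+1) * k + 2 * (k+1) := by ring
  rw [e3] at hge ⊢
  rw [etop] at hbound
  split_ifs with c1 <;> omega

lemma sum_wAB_le (ρ : ℕ → AB) (m : ℕ) : ∑ i ∈ Finset.range m, wAB (ρ i) ≤ m := by
  induction m with
  | zero => simp
  | succ m ih =>
    rw [Finset.sum_range_succ]
    have : wAB (ρ m) ≤ 1 := by cases ρ m <;> simp [wAB]
    push_cast
    omega

lemma eventually_a_bad (ρ : ℕ → AB) (N : ℕ) (h : ∀ k ≥ N, ρ k = AB.a) :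
    ¬ ∀ n : ℕ, 0 ≤ ∑ i ∈ Finset.range n, wAB (ρ i) := by
  intro hall
  have key : ∀ j : ℕ, ∑ i ∈ Finset.range (N + j), wAB (ρ i)
      = (∑ i ∈ Finset.range N, wAB (ρ i)) - j := by
    intro j
    induction j with
    | zero => simp
    | succ j ih =>
      rw [show N + (j+1) = (N + j) + 1 from rfl, Finset.sum_range_succ, ih,
        h (N + j) (by omega)]
      simp [wAB]
      ring
  have h1 := hall (N + (N + 1))
  have h2 := key (N + 1)
  have h3 := sum_wAB_le ρ N
  rw [h2] at h1
  push_cast at h1 h3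
  omega

lemma chi_not_periodic (N p : ℕ) (hp : 1 ≤ p) :
    ¬ ∀ j ≥ N, chi (j + p) = chi j := by
  intro hper
  set j0 := (N+1) * ((N+1) - 1) with hj0
  have hj0b : chi j0 = AB.b := chi_b' (by omega)
  have hj0e : j0 = N * N + N := by rw [hj0]; simp; ring
  have hb : ∀ t : ℕ, chi (j0 + t * p) = AB.b := by
    intro t
    induction t with
    | zero => simpa using hj0b
    | succ t ih =>
      have := hper (j0 + t * p) (by omega)
      rw [show j0 + (t+1) * p = (j0 + t * p) + p from by ring] at *
      rw [this, ih]
  set n := j0 + p + 1 with hn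
  have hnsq : n ≤ n * n := Nat.le_mul_of_pos_left n (by omega)
  set q := n * n - j0 with hq
  set t := q / p + 1 with ht
  have hdm := Nat.div_add_mod q p
  have hmod : q % p < p := Nat.mod_lt _ (by omega)
  have hc : t * p = p * (q / p) + p := by rw [ht]; ring
  have ht1 : n * n ≤ j0 + t * p := by omega
  have ht2 : j0 + t * p < n * n + n := by omega
  have ha := chi_a' (show 1 ≤ n by omega) ht1 ht2
  rw [hb t] at ha
  exact absurd ha (by decide)

/-- Player 1 can win from `(ε, s)` but not with finite memory. -/
theorem stmt14 :
    O14.Wins1From W14 [] V14.s ∧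
    ¬ ∃ σ1, O14.Valid1 σ1 ∧ Arena.IsFM O14.V1 σ1 ∧ O14.Winning1 W14 σ1 [] V14.s := by
  have hV1 : ∀ v : V14, v ∈ O14.V1 := fun v => Set.mem_univ v
  have hE : ∀ e : V14 × V14, e ∈ O14.E := fun e => Set.mem_univ e
  constructor
  · -- Part 1: winning strategy producing χ
    refine ⟨fun w _ => if chi (w.length + 1) = AB.b then V14.s else V14.t,
      fun w v _ => hE _, ?_⟩
    intro σ2 hσ2
    set σw : List AB → V14 → V14 :=
      fun w _ => if chi (w.length + 1) = AB.b then V14.s else V14.t with hσw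
    set f := O14.combine σw σ2 with hf
    have hcomb : ∀ w v, f w v = σw w v := by
      intro w v
      simp [hf, Arena.combine, hV1 v]
    have key : ∀ k : ℕ, (Arena.stepSeq O14 f [] V14.s k).1.length = k ∧
        O14.Γ (Arena.stepSeq O14 f [] V14.s k).2 = chi k := by
      intro k
      induction k with
      | zero => exact ⟨rfl, by rw [chi_zero]; rfl⟩
      | succ k ih =>
        obtain ⟨ihl, ihΓ⟩ := ih
        constructor
        · simp [Arena.stepSeq, ihl]
        · show O14.Γ (f (Arena.stepSeq O14 f [] V14.s k).1
            (Arena.stepSeq O14 f [] V14.s k).2) = chi (k+1)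
          rw [hcomb, hσw]
          simp only [ihl]
          split_ifs with h
          · rw [h]; rfl
          · cases hc : chi (k + 1) with
            | a => rfl
            | b => exact absurd hc h
    have hplay : O14.play f [] V14.s = chi := by
      funext i
      have : Arena.play O14 f [] V14.s i
          = O14.Γ (Arena.stepSeq O14 f [] V14.s i).2 := by
        simp [Arena.play]
      rw [this, (key i).2]
    show O14.play f [] V14.s ∈ W14
    rw [hplay]
    exact ⟨Or.inr rfl, chi_sum_nonneg⟩
  · -- Part 2: no finite-memory winning strategy
    rintro ⟨σ1, hval, ⟨M, instM, m0, αu, αn, hFM⟩, hwin⟩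
    haveI := instM
    set σ2 : List AB → V14 → V14 := fun _ v => v with hσ2
    have hσ2v : O14.Valid2 σ2 := by
      intro w v hv
      simp [O14] at hv
    have hρ := hwin σ2 hσ2v
    set f := O14.combine σ1 σ2 with hf
    have hcomb : ∀ w v, f w v = σ1 w v := by
      intro w v
      simp [hf, Arena.combine, hV1 v]
    set st : ℕ → M × V14 := fun k =>
      ((Arena.stepSeq O14 f [] V14.s k).1.foldl αu m0,
       (Arena.stepSeq O14 f [] V14.s k).2) with hst
    set F : M × V14 → M × V14 := fun q => (αu q.1 (O14.Γ q.2), αn q.1 q.2) with hF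
    have hstep : ∀ k, st (k + 1) = F (st k) := by
      intro k
      have h2 : f (Arena.stepSeq O14 f [] V14.s k).1 (Arena.stepSeq O14 f [] V14.s k).2
          = αn ((Arena.stepSeq O14 f [] V14.s k).1.foldl αu m0)
              (Arena.stepSeq O14 f [] V14.s k).2 := by
        rw [hcomb]
        exact hFM _ _ (hV1 _)
      simp only [hst, hF, Arena.stepSeq, List.foldl_append, List.foldl_cons, List.foldl_nil]
      rw [h2]
    obtain ⟨k1, k2, hne, heq⟩ := Finite.exists_ne_map_eq_of_infinite st
    obtain ⟨a, b, hab, hsteq⟩ : ∃ a b, a < b ∧ st a = st b := by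
      rcases lt_or_gt_of_ne hne with h | h
      · exact ⟨k1, k2, h, heq⟩
      · exact ⟨k2, k1, h, heq.symm⟩
    set p := b - a with hpp
    have hp1 : 1 ≤ p := by omega
    have hper : ∀ j, a ≤ j → st (j + p) = st j := by
      intro j hj
      induction j, hj using Nat.le_induction with
      | base => rw [show a + p = b from by omega]; exact hsteq.symm
      | succ j hj ih =>
        rw [show j + 1 + p = (j + p) + 1 from by omega, hstep, ih, ← hstep]
    have hρfun : ∀ i, O14.play f [] V14.s i = O14.Γ (st i).2 := by
      intro i
      simp [Arena.play, hst]
    obtain ⟨h0, hEn⟩ := hρ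
    rcases h0 with ⟨N, hN⟩ | hchi
    · exact eventually_a_bad _ N hN hEn
    · have hcp : ∀ j ≥ a, chi (j + p) = chi j := by
        intro j hj
        rw [← hchi, hρfun, hρfun, hper j hj]
      exact chi_not_periodic a p hp1 hcp
end

section
/- Let g = (O, W) be a game with C finite, and let k, l ∈ ℕ. Assume: (a) for every (w, v) ∈ C^* × V from which Player 1 has a winning strategy, Player 1 has a finite-memory winning strategy from (w, v) of size at most k; (b) for every vertex v ∈ V and every finite-memory strategy σ₁ of Player 1 of size at most k, there is a DFA over C with at most l states accepting exactly the language {w ∈ C^* : σ₁ is winning from (w, v)}. Then Player 1 has a finite-memory subgame-perfect strategy, i.e., a single finite-memory strategy that is winning from every (w, v) ∈ C^* × V from which Player 1 has any winning strategy. -/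
section Stmt16Aux

namespace Arena

variable {V C : Type}

theorem stepSeq_succ (O : Arena V C) (σ : List C → V → V) (w : List C) (v : V) (n : ℕ) :
    O.stepSeq σ w v (n + 1) =
      ((O.stepSeq σ w v n).1 ++ [O.Γ (O.stepSeq σ w v n).2],
        σ (O.stepSeq σ w v n).1 (O.stepSeq σ w v n).2) := rfl

theorem stepSeq_len (O : Arena V C) (σ : List C → V → V) (w : List C) (v : V) (n : ℕ) :
    ((O.stepSeq σ w v n).1).length = w.length + n := by
  induction n with
  | zero => rfl
  | succ n ih => simp [stepSeq_succ, ih]; omega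

theorem stepSeq_shift (O : Arena V C) (σ : List C → V → V) (w : List C) (v : V) (n : ℕ) :
    O.stepSeq σ w v (n + 1) = O.stepSeq σ (w ++ [O.Γ v]) (σ w v) n := by
  induction n with
  | zero => rfl
  | succ n ih => rw [stepSeq_succ, ih, stepSeq_succ]

theorem play_shift (O : Arena V C) (σ : List C → V → V) (w : List C) (v : V) :
    O.play σ (w ++ [O.Γ v]) (σ w v) = O.play σ w v := by
  funext i
  unfold play
  rcases lt_trichotomy i w.length with h | h | h
  · have h' : i < (w ++ [O.Γ v]).length := by simp; omega
    rw [dif_pos h, dif_pos h']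
    simp [List.get_eq_getElem, List.getElem_append_left h]
  · subst h
    have h' : w.length < (w ++ [O.Γ v]).length := by simp
    rw [dif_pos h', dif_neg (lt_irrefl _), Nat.sub_self]
    simp only [List.get_eq_getElem, List.getElem_concat_length]
    rfl
  · have h1 : ¬ i < (w ++ [O.Γ v]).length := by simp; omega
    rw [dif_neg h1, dif_neg (by omega)]
    have : i - w.length = (i - (w ++ [O.Γ v]).length) + 1 := by simp; omega
    rw [this, stepSeq_shift]

theorem stepSeq_congr (O : Arena V C) {σ σ' : List C → V → V} (w : List C) (v : V)
    (hag : ∀ n, σ (O.stepSeq σ w v n).1 (O.stepSeq σ w v n).2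
      = σ' (O.stepSeq σ w v n).1 (O.stepSeq σ w v n).2) :
    ∀ n, O.stepSeq σ w v n = O.stepSeq σ' w v n := by
  intro n
  induction n with
  | zero => rfl
  | succ n ih => rw [stepSeq_succ, stepSeq_succ, ← ih, hag n]

theorem play_congr (O : Arena V C) {σ σ' : List C → V → V} (w : List C) (v : V)
    (hag : ∀ n, σ (O.stepSeq σ w v n).1 (O.stepSeq σ w v n).2
      = σ' (O.stepSeq σ w v n).1 (O.stepSeq σ w v n).2) :
    O.play σ w v = O.play σ' w v := by
  funext i
  unfold play
  split
  · rfl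
  · rw [O.stepSeq_congr w v hag]

theorem combine_congr (O : Arena V C) {σ1 σ1' : List C → V → V} (σ2 : List C → V → V)
    (h : ∀ w, ∀ v ∈ O.V1, σ1 w v = σ1' w v) :
    O.combine σ1 σ2 = O.combine σ1' σ2 := by
  funext w v
  unfold combine
  split
  · exact h w v (by assumption)
  · rfl

theorem winning1_congr (O : Arena V C) (W : Set (ℕ → C)) {σ1 σ1' : List C → V → V}
    (h : ∀ w, ∀ v ∈ O.V1, σ1 w v = σ1' w v) {w : List C} {v : V}
    (hw : O.Winning1 W σ1 w v) : O.Winning1 W σ1' w v := by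
  intro σ2 h2
  rw [← O.combine_congr σ2 h]
  exact hw σ2 h2

theorem winning1_step1 (O : Arena V C) (W : Set (ℕ → C)) {σ1 : List C → V → V}
    {w : List C} {v : V} (hw : O.Winning1 W σ1 w v) (hv : v ∈ O.V1) :
    O.Winning1 W σ1 (w ++ [O.Γ v]) (σ1 w v) := by
  intro σ2 h2
  have hc : O.combine σ1 σ2 w v = σ1 w v := by simp [combine, hv]
  rw [← hc, play_shift]
  exact hw σ2 h2

open Classical in
theorem winning1_step2 (O : Arena V C) (W : Set (ℕ → C)) {σ1 : List C → V → V}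
    {w : List C} {v u : V} (hw : O.Winning1 W σ1 w v) (hv : v ∉ O.V1)
    (he : (v, u) ∈ O.E) : O.Winning1 W σ1 (w ++ [O.Γ v]) u := by
  intro σ2 h2
  set σ2' : List C → V → V := fun w' v' => if w' = w ∧ v' = v then u else σ2 w' v' with hσ2'
  have h2' : O.Valid2 σ2' := by
    intro w' v' hv'
    by_cases h : w' = w ∧ v' = v
    · simp only [hσ2', if_pos h]
      rw [h.2]
      exact he
    · simp only [hσ2', if_neg h]
      exact h2 w' v' hv'
  have hcv : O.combine σ1 σ2' w v = u := by simp [combine, hv, hσ2']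
  have h1 : O.play (O.combine σ1 σ2') (w ++ [O.Γ v]) u ∈ W := by
    rw [← hcv, play_shift]
    exact hw σ2' h2'
  have hpe : O.play (O.combine σ1 σ2') (w ++ [O.Γ v]) u
      = O.play (O.combine σ1 σ2) (w ++ [O.Γ v]) u := by
    apply play_congr
    intro n
    set q := O.stepSeq (O.combine σ1 σ2') (w ++ [O.Γ v]) u n with hq
    have hlen : q.1.length = w.length + 1 + n := by
      rw [hq, stepSeq_len]; simp
    have hne : q.1 ≠ w := by
      intro hqe
      rw [hqe] at hlen
      omega
    unfold combine
    split
    · rfl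
    · show (if q.1 = w ∧ q.2 = v then u else σ2 q.1 q.2) = σ2 q.1 q.2
      exact if_neg (by rintro ⟨ha', _⟩; exact hne ha')
  rw [← hpe]
  exact h1

end Arena

end Stmt16Aux

/-- Lemma 15: construction of a finite-memory subgame-perfect strategy
for Player 1. -/
theorem stmt16 {V C : Type} [Fintype V] [Fintype C] (O : Arena V C) (hwf : O.WF)
    (W : Set (ℕ → C)) (k l : ℕ)
    (ha : ∀ (w : List C), ∀ v ∈ O.vertices, O.Wins1From W w v →
      ∃ σ1, O.Valid1 σ1 ∧ Arena.IsFMSize O.V1 σ1 k ∧ O.Winning1 W σ1 w v)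
    (hb : ∀ v ∈ O.vertices, ∀ σ1 : List C → V → V, O.Valid1 σ1 →
      Arena.IsFMSize O.V1 σ1 k →
      ∃ (Q : Type) (inst : Fintype Q), @Fintype.card Q inst ≤ l ∧
        ∃ A : DFA C Q, ∀ w : List C, w ∈ A.accepts ↔ O.Winning1 W σ1 w v) :
    ∃ σ1, O.Valid1 σ1 ∧ Arena.IsFM O.V1 σ1 ∧
      ∀ (w : List C), ∀ v ∈ O.vertices, O.Wins1From W w v → O.Winning1 W σ1 w v := by
  classical
  have hnext : ∀ v ∈ O.vertices, ∃ u, (v, u) ∈ O.E := hwf.2.2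
  set next : V → V := fun v => if h : ∃ u, (v, u) ∈ O.E then h.choose else v with hnextdef
  have hnextE : ∀ v ∈ O.vertices, (v, next v) ∈ O.E := by
    intro v hv
    have h := hnext v hv
    simp only [hnextdef, dif_pos h]
    exact h.choose_spec
  have hV1sub : O.V1 ⊆ O.vertices := Set.subset_union_left
  haveI : DecidableEq V := Classical.decEq _
  haveI : DecidableEq C := Classical.decEq _
  -- the finitely many Moore machines with state set `Fin k`
  let I := Fin k × (Fin k → C → Fin k) × (Fin k → V → V)
  haveI : DecidableEq I := Classical.decEq _
  let man : I → Fin k → V → V := fun i q v =>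
    if (v, i.2.2 q v) ∈ O.E then i.2.2 q v else next v
  let stratOf : I → List C → V → V := fun i w v => man i (w.foldl i.2.1 i.1) v
  have hstratValid : ∀ i, O.Valid1 (stratOf i) := by
    intro i w v hv
    by_cases h : (v, i.2.2 (w.foldl i.2.1 i.1) v) ∈ O.E
    · simp [stratOf, man, h]
    · simp only [stratOf, man, if_neg h]
      exact hnextE v (hV1sub hv)
  have hstratFM : ∀ i, Arena.IsFMSize O.V1 (stratOf i) k :=
    fun i => ⟨Fin k, inferInstance, by simp, i.1, i.2.1, man i, fun w v _ => rfl⟩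
  -- every valid FM strategy of size ≤ k is represented on V1
  have hrep : ∀ σ1 : List C → V → V, O.Valid1 σ1 → Arena.IsFMSize O.V1 σ1 k →
      ∃ i : I, ∀ w, ∀ v ∈ O.V1, σ1 w v = stratOf i w v := by
    rintro σ1 hval ⟨M, instM, hcard, m0, αu, αn, hσ⟩
    letI := instM
    haveI : Nonempty M := ⟨m0⟩
    obtain ⟨f⟩ : Nonempty (M ↪ Fin k) :=
      Function.Embedding.nonempty_of_card_le (by simpa using hcard)
    set g : Fin k → M := Function.invFun f with hgdef
    have hg : ∀ m, g (f m) = m := Function.leftInverse_invFun f.injective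
    refine ⟨(f m0, fun q c => f (αu (g q) c), fun q v => αn (g q) v), ?_⟩
    have hfold : ∀ (w : List C) (m : M),
        w.foldl (fun q c => f (αu (g q) c)) (f m) = f (w.foldl αu m) := by
      intro w
      induction w with
      | nil => intro m; rfl
      | cons c w ih =>
        intro m
        simp only [List.foldl_cons, hg]
        exact ih (αu m c)
    intro w v hv
    have h1 : σ1 w v = αn (w.foldl αu m0) v := hσ w v hv
    have h2 : stratOf (f m0, fun q c => f (αu (g q) c), fun q v => αn (g q) v) w v
        = if (v, σ1 w v) ∈ O.E then σ1 w v else next v := by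
      simp only [stratOf, man, hfold w m0, hg, h1]
    rw [h2, if_pos (hval w v hv)]
  -- the DFAs from hypothesis (b)
  have hD : ∀ i : I, ∀ v : V, ∃ (Q : Type) (inst : Fintype Q) (A : DFA C Q),
      ∀ w : List C, v ∈ O.vertices → (w ∈ A.accepts ↔ O.Winning1 W (stratOf i) w v) := by
    intro i v
    by_cases hv : v ∈ O.vertices
    · obtain ⟨Q, inst, _, A, hA⟩ := hb v hv (stratOf i) (hstratValid i) (hstratFM i)
      exact ⟨Q, inst, A, fun w _ => hA w⟩
    · exact ⟨PUnit, inferInstance, ⟨fun _ _ => PUnit.unit, PUnit.unit, ∅⟩,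
        fun w hv' => absurd hv' hv⟩
  choose QD instQ A hA using hD
  letI : ∀ (i : I) (v : V), Fintype (QD i v) := instQ
  -- a fixed selection of a minimal-rank element of a finite set of machines
  let rank : I → ℕ := fun i => (Fintype.equivFin I i : ℕ)
  have hrank_inj : Function.Injective rank := fun a b h =>
    (Fintype.equivFin I).injective (Fin.val_injective h)
  let sel : Finset I → Option I := fun s =>
    if h : s.Nonempty then some (Finset.exists_min_image s rank h).choose else none
  have hsel_mem : ∀ s i, sel s = some i → i ∈ s ∧ ∀ j ∈ s, rank i ≤ rank j := by
    intro s i hi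
    by_cases h : s.Nonempty
    · simp only [sel, dif_pos h, Option.some.injEq] at hi
      obtain ⟨hm, hmin⟩ := (Finset.exists_min_image s rank h).choose_spec
      rw [← hi]
      exact ⟨hm, hmin⟩
    · simp [sel, dif_neg h] at hi
  have hsel_some : ∀ s : Finset I, s.Nonempty → ∃ i, sel s = some i := by
    intro s h
    exact ⟨_, dif_pos h⟩
  -- the set of machines winning from (w, v), and the combined strategy
  let good : List C → V → Finset I := fun w v =>
    Finset.univ.filter (fun i => O.Winning1 W (stratOf i) w v)
  have hgood_mem : ∀ w v i, i ∈ good w v ↔ O.Winning1 W (stratOf i) w v := by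
    intro w v i
    simp [good]
  let σ : List C → V → V := fun w v =>
    (sel (good w v)).elim (next v) (fun i => stratOf i w v)
  have hσ_some : ∀ w v i, sel (good w v) = some i → σ w v = stratOf i w v := by
    intro w v i h
    simp [σ, h]
  have hσ_none : ∀ w v, sel (good w v) = none → σ w v = next v := by
    intro w v h
    simp [σ, h]
  have hσ_valid : O.Valid1 σ := by
    intro w v hv
    rcases hs : sel (good w v) with _ | i
    · rw [hσ_none w v hs]
      exact hnextE v (hV1sub hv)
    · rw [hσ_some w v i hs]
      exact hstratValid i w v hv
  -- σ is finite-memory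
  let MM := (∀ (i : I) (v : V), QD i v) × (I → Fin k)
  let mm0 : MM := (fun i v => (A i v).start, fun i => i.1)
  let upd : MM → C → MM := fun m c =>
    (fun i v => (A i v).step (m.1 i v) c, fun i => i.2.1 (m.2 i) c)
  let nxt : MM → V → V := fun m v =>
    (sel (Finset.univ.filter (fun i => m.1 i v ∈ (A i v).accept))).elim (next v)
      (fun i => man i (m.2 i) v)
  have hfold : ∀ (w : List C) (m : MM), w.foldl upd m =
      (fun i v' => (A i v').evalFrom (m.1 i v') w, fun i => w.foldl i.2.1 (m.2 i)) := by
    intro w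
    induction w with
    | nil => intro m; rfl
    | cons c w ih =>
      intro m
      rw [List.foldl_cons, ih]
      rfl
  haveI h1fin : Fintype ((i : I) → (v : V) → QD i v) := by infer_instance
  haveI h2fin : Fintype (I → Fin k) := by infer_instance
  haveI hMMfin : Fintype MM := by
    dsimp only [MM]
    infer_instance
  have hFM : Arena.IsFM O.V1 σ := by
    refine ⟨MM, hMMfin, mm0, upd, nxt, ?_⟩
    intro w v hv
    rw [hfold w mm0]
    have hset : (Finset.univ.filter
        (fun i : I => (A i v).evalFrom (A i v).start w ∈ (A i v).accept)) = good w v := by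
      apply Finset.ext
      intro i
      simp only [Finset.mem_filter, Finset.mem_univ, true_and, good]
      exact hA i v w (hV1sub hv)
    show σ w v = (sel (Finset.univ.filter
        (fun i : I => (A i v).evalFrom (A i v).start w ∈ (A i v).accept))).elim (next v)
      (fun i => man i (w.foldl i.2.1 i.1) v)
    rw [hset]
  refine ⟨σ, hσ_valid, hFM, ?_⟩
  intro w0 v0 hv0 hwins σ2 h2
  set σc := O.combine σ σ2 with hσc
  let p : ℕ → List C × V := fun n => O.stepSeq σc w0 v0 n
  have hp1 : ∀ n, (p (n+1)).1 = (p n).1 ++ [O.Γ (p n).2] := fun n => rfl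
  have hp2 : ∀ n, (p (n+1)).2 = σc (p n).1 (p n).2 := fun n => rfl
  -- the base: some machine wins from (w0, v0)
  obtain ⟨σ1', hval', hfm', hwin'⟩ := ha w0 v0 hv0 hwins
  obtain ⟨i0, hi0⟩ := hrep σ1' hval' hfm'
  have hbase : (good w0 v0).Nonempty :=
    ⟨i0, (hgood_mem _ _ _).2 (O.winning1_congr W hi0 hwin')⟩
  -- one step of the invariant
  have hstep : ∀ n i, sel (good (p n).1 (p n).2) = some i → (p n).2 ∈ O.vertices →
      ((p n).2, (p (n+1)).2) ∈ O.E ∧ i ∈ good (p (n+1)).1 (p (n+1)).2 := by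
    intro n i hi hvert
    have hwin_i : O.Winning1 W (stratOf i) (p n).1 (p n).2 :=
      (hgood_mem _ _ _).1 (hsel_mem _ _ hi).1
    by_cases h1 : (p n).2 ∈ O.V1
    · have hc : σc (p n).1 (p n).2 = stratOf i (p n).1 (p n).2 := by
        rw [hσc]
        show (if (p n).2 ∈ O.V1 then σ (p n).1 (p n).2 else σ2 (p n).1 (p n).2) = _
        rw [if_pos h1, hσ_some _ _ _ hi]
      constructor
      · rw [hp2 n, hc]
        exact hstratValid i (p n).1 (p n).2 h1
      · rw [hgood_mem, hp1 n, hp2 n, hc]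
        exact O.winning1_step1 W hwin_i h1
    · have hv2 : (p n).2 ∈ O.V2 := by
        simp only [Arena.vertices, Set.mem_union] at hvert
        exact hvert.resolve_left h1
      have hc : σc (p n).1 (p n).2 = σ2 (p n).1 (p n).2 := by
        rw [hσc]
        show (if (p n).2 ∈ O.V1 then σ (p n).1 (p n).2 else σ2 (p n).1 (p n).2) = _
        rw [if_neg h1]
      have he : ((p n).2, σ2 (p n).1 (p n).2) ∈ O.E := h2 (p n).1 (p n).2 hv2
      constructor
      · rw [hp2 n, hc]
        exact he
      · rw [hgood_mem, hp1 n, hp2 n, hc]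
        exact O.winning1_step2 W hwin_i h1 he
  -- the invariant
  have key : ∀ n, (p n).2 ∈ O.vertices ∧ ∃ i, sel (good (p n).1 (p n).2) = some i := by
    intro n
    induction n with
    | zero => exact ⟨hv0, hsel_some _ hbase⟩
    | succ n ih =>
      obtain ⟨hvert, i, hi⟩ := ih
      obtain ⟨hedge, hmem⟩ := hstep n i hi hvert
      exact ⟨(hwf.2.1 _ hedge).2, hsel_some _ ⟨i, hmem⟩⟩
  choose hvert iseq hiseq using key
  -- the rank of the selected machine is non-increasing, hence eventually constant
  have hmono : ∀ n, rank (iseq (n+1)) ≤ rank (iseq n) := by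
    intro n
    have hmem := (hstep n (iseq n) (hiseq n) (hvert n)).2
    exact (hsel_mem _ _ (hiseq (n+1))).2 _ hmem
  have hanti : ∀ a b, a ≤ b → rank (iseq b) ≤ rank (iseq a) := by
    intro a b hab
    induction b, hab using Nat.le_induction with
    | base => exact le_refl _
    | succ n hn ih => exact (hmono n).trans ih
  obtain ⟨N, hN⟩ : ∃ N, ∀ n, N ≤ n → iseq n = iseq N := by
    obtain ⟨N, hNr⟩ := Nat.sInf_mem (Set.range_nonempty (fun n => rank (iseq n)))
    refine ⟨N, fun n hn => hrank_inj ?_⟩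
    have h1 : rank (iseq n) ≤ rank (iseq N) := hanti N n hn
    have hNr' : rank (iseq N) = sInf (Set.range fun n => rank (iseq n)) := hNr
    have h2 : rank (iseq N) ≤ rank (iseq n) := by
      rw [hNr']
      exact Nat.sInf_le ⟨n, rfl⟩
    exact le_antisymm h1 h2
  -- the play equals the play of the eventually-followed winning machine
  have hplays : ∀ n, O.play σc (p n).1 (p n).2 = O.play σc w0 v0 := by
    intro n
    induction n with
    | zero => rfl
    | succ n ih =>
      rw [← ih]
      show O.play σc ((p n).1 ++ [O.Γ (p n).2]) (σc (p n).1 (p n).2) = _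
      exact O.play_shift σc (p n).1 (p n).2
  have hstepshift : ∀ n, O.stepSeq σc (p N).1 (p N).2 n = p (N + n) := by
    intro n
    induction n with
    | zero => rfl
    | succ n ih =>
      rw [Arena.stepSeq_succ, ih]
      rfl
  have hfin : O.play σc (p N).1 (p N).2
      = O.play (O.combine (stratOf (iseq N)) σ2) (p N).1 (p N).2 := by
    apply Arena.play_congr
    intro n
    rw [hstepshift n]
    by_cases h1 : (p (N+n)).2 ∈ O.V1
    · have hi := hiseq (N + n)
      have hcc : σc (p (N+n)).1 (p (N+n)).2 = stratOf (iseq N) (p (N+n)).1 (p (N+n)).2 := by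
        rw [hσc]
        show (if (p (N+n)).2 ∈ O.V1 then σ (p (N+n)).1 (p (N+n)).2
          else σ2 (p (N+n)).1 (p (N+n)).2) = _
        rw [if_pos h1, hσ_some _ _ _ hi, hN (N+n) (Nat.le_add_right N n)]
      rw [hcc]
      show _ = (if (p (N+n)).2 ∈ O.V1 then stratOf (iseq N) (p (N+n)).1 (p (N+n)).2
        else σ2 (p (N+n)).1 (p (N+n)).2)
      rw [if_pos h1]
    · show (if (p (N+n)).2 ∈ O.V1 then σ (p (N+n)).1 (p (N+n)).2
        else σ2 (p (N+n)).1 (p (N+n)).2)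
        = (if (p (N+n)).2 ∈ O.V1 then stratOf (iseq N) (p (N+n)).1 (p (N+n)).2
        else σ2 (p (N+n)).1 (p (N+n)).2)
      rw [if_neg h1, if_neg h1]
  have hwinN : O.Winning1 W (stratOf (iseq N)) (p N).1 (p N).2 :=
    (hgood_mem _ _ _).1 (hsel_mem _ _ (hiseq N)).1
  have hfinal := hwinN σ2 h2
  rw [← hfin, hplays N] at hfinal
  exact hfinal
end
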